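/- arXiv:2101.01010 — 5 statements merged into one kernel-verified Lean document; each statement's English description precedes it below -/
import Mathlib

section
/- There exists a constant D > 2, depending only on d, r₀, the minimum of p on [0, r₀] and the Lipschitz constant of p, such that for all 0 < δ ≤ r₀/2 and all 0 < ε ≤ δ/2 one has m(Ω_{δ+ε,B}) ≤ (1 + Dε/δ)·m(Ω_{δ,B}) and m(Ω_{δ−ε,B}) ≥ (1 − Dε/δ)·m(Ω_{δ,B}). -/
/-! Since `m(O_r × B) = r ^ d * p r * m_f(B)`, everything is about `V r = r ^ d * p r`.
With `t = ε / δ ≤ 1/2`, `V (δ ± ε) / V δ = (1 ± t) ^ d * (p (δ ± ε) / p δ)`.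
The first factor is within `exp d * t` of `1` (convexity of `exp` above, Bernoulli below);
the second is within `K * t` of `1` for `K = L * r₀ / min p`, because
`|p (δ ± ε) - p δ| ≤ L * ε = L * δ * t ≤ L * r₀ * t`.
Multiplying the two bounds gives `D = exp d + K + exp d * K + 3`. -/

open MeasureTheory Set Pointwise

namespace Real

lemma exp_mul_le_one_add_mul {d t : ℝ} (ht₀ : 0 ≤ t) (ht₁ : t ≤ 1) :
    exp (d * t) ≤ 1 + (exp d - 1) * t := by
  have := convexOn_exp.2 (mem_univ 0) (mem_univ d) (sub_nonneg.2 ht₁) ht₀ (by ring)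
  simp only [smul_eq_mul, mul_zero, zero_add, exp_zero, mul_one] at this
  rw [mul_comm d t]
  linarith

lemma one_add_rpow_le_one_add_exp_mul {d t : ℝ} (hd : 0 ≤ d) (ht₀ : 0 ≤ t) (ht₁ : t ≤ 1) :
    (1 + t) ^ d ≤ 1 + exp d * t :=
  calc (1 + t) ^ d ≤ exp t ^ d := by
        gcongr; linarith [add_one_le_exp t]
    _ = exp (d * t) := by rw [← exp_mul, mul_comm]
    _ ≤ 1 + (exp d - 1) * t := exp_mul_le_one_add_mul ht₀ ht₁
    _ ≤ 1 + exp d * t := by nlinarith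

lemma one_sub_exp_mul_le_one_sub_rpow {d t : ℝ} (hd : 0 ≤ d) (ht₀ : 0 ≤ t) (ht₁ : t < 1) :
    1 - exp d * t ≤ (1 - t) ^ d := by
  have hd_le : d ≤ exp d := by linarith [add_one_le_exp d]
  have one_le : 1 ≤ exp d := one_le_exp hd
  rcases le_total 1 d with hd1 | hd1
  · have := one_add_mul_self_le_rpow_one_add (s := -t) (by linarith) hd1
    rw [← sub_eq_add_neg] at this
    nlinarith
  · have := rpow_le_rpow_of_exponent_ge (by linarith : 0 < 1 - t) (by linarith) hd1
    rw [rpow_one] at this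
    nlinarith

end Real

lemma LipschitzOnWith.abs_div_sub_one_le {α : Type*} [PseudoMetricSpace α] {f : α → ℝ}
    {L : NNReal} {s : Set α} (hf : LipschitzOnWith L f s) {x y : α} (hx : x ∈ s) (hy : y ∈ s)
    {m : ℝ} (hm : 0 < m) (hmx : m ≤ f x) :
    |f y / f x - 1| ≤ L / m * dist y x := by
  have hfx : 0 < f x := hm.trans_le hmx
  rw [div_sub_one hfx.ne', abs_div, abs_of_pos hfx, div_le_iff₀ hfx, ← Real.dist_eq]
  calc dist (f y) (f x) ≤ L * dist y x := hf.dist_le_mul y hy x hx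
    _ = L / m * dist y x * m := by field_simp
    _ ≤ L / m * dist y x * f x := by gcongr

lemma mul_le_one_add_mul {a b A B t : ℝ} (ha₀ : 0 ≤ a) (hA : 0 ≤ A) (hB : 0 ≤ B)
    (ht₀ : 0 ≤ t) (ht₁ : t ≤ 1) (ha : a ≤ 1 + A * t) (hb : b ≤ 1 + B * t) :
    a * b ≤ 1 + (A + B + A * B) * t := by
  have htt : t * t ≤ t := by nlinarith
  calc a * b ≤ a * (1 + B * t) := mul_le_mul_of_nonneg_left hb ha₀
    _ ≤ (1 + A * t) * (1 + B * t) := mul_le_mul_of_nonneg_right ha (by positivity)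
    _ ≤ 1 + (A + B + A * B) * t := by
        nlinarith [mul_le_mul_of_nonneg_left htt (mul_nonneg hA hB)]

lemma one_sub_mul_le_mul {a b A B t : ℝ} (ha₀ : 0 ≤ a) (hb₀ : 0 ≤ b) (hA : 0 ≤ A) (hB : 0 ≤ B)
    (ht₀ : 0 ≤ t) (ha : 1 - A * t ≤ a) (hb : 1 - B * t ≤ b) :
    1 - (A + B) * t ≤ a * b := by
  rcases lt_or_ge (1 - A * t) 0 with hAt | hAt
  · nlinarith [mul_nonneg ha₀ hb₀, mul_nonneg hB ht₀]
  rcases lt_or_ge (1 - B * t) 0 with hBt | hBt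
  · nlinarith [mul_nonneg ha₀ hb₀, mul_nonneg hA ht₀]
  calc 1 - (A + B) * t ≤ (1 - A * t) * (1 - B * t) := by
        nlinarith [mul_nonneg hA hB, mul_nonneg ht₀ ht₀]
    _ ≤ a * b := mul_le_mul ha hb hBt ha₀

section RadialVolume

variable {f : ℝ → ℝ} {L : NNReal} {R m d δ ε D : ℝ}

lemma LipschitzOnWith.abs_div_sub_one_le_mul_div (hf : LipschitzOnWith L f (Icc 0 R))
    (hm : 0 < m) (hmf : ∀ r ∈ Icc 0 R, m ≤ f r) (hδ : 0 < δ) (hδR : δ ≤ R) {y : ℝ}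
    (hy : y ∈ Icc 0 R) :
    |f y / f δ - 1| ≤ L * R / m * (|y - δ| / δ) := by
  have hδ_mem : δ ∈ Icc 0 R := ⟨hδ.le, hδR⟩
  calc |f y / f δ - 1| ≤ L / m * |y - δ| :=
        hf.abs_div_sub_one_le hδ_mem hy hm (hmf δ hδ_mem)
    _ ≤ L / m * (R * (|y - δ| / δ)) := by
        gcongr
        rw [mul_div, le_div_iff₀ hδ]
        nlinarith [abs_nonneg (y - δ)]
    _ = L * R / m * (|y - δ| / δ) := by ring

lemma add_rpow_mul_le (hd : 0 ≤ d) (hf : LipschitzOnWith L f (Icc 0 R)) (hm : 0 < m)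
    (hmf : ∀ r ∈ Icc 0 R, m ≤ f r) (hδ : 0 < δ) (hε : 0 ≤ ε) (hεδ : ε ≤ δ) (hR : δ + ε ≤ R)
    (hD : Real.exp d + L * R / m + Real.exp d * (L * R / m) ≤ D) :
    (δ + ε) ^ d * f (δ + ε) ≤ (1 + D * ε / δ) * (δ ^ d * f δ) := by
  have hfδ : 0 < f δ := hm.trans_le (hmf δ ⟨hδ.le, by linarith⟩)
  have hratio := hf.abs_div_sub_one_le_mul_div hm hmf hδ (by linarith)
    (⟨by linarith, hR⟩ : δ + ε ∈ Icc 0 R)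
  rw [add_sub_cancel_left, abs_of_nonneg hε] at hratio
  set t := ε / δ
  set K := L * R / m
  have ht₀ : 0 ≤ t := by positivity
  have ht₁ : t ≤ 1 := div_le_one_of_le₀ hεδ hδ.le
  have hK : 0 ≤ K := div_nonneg (mul_nonneg L.coe_nonneg (by linarith)) hm.le
  have hprod : (1 + t) ^ d * (f (δ + ε) / f δ) ≤ 1 + (Real.exp d + K + Real.exp d * K) * t :=
    mul_le_one_add_mul (by positivity) (Real.exp_pos d).le hK ht₀ ht₁
      (Real.one_add_rpow_le_one_add_exp_mul hd ht₀ ht₁) (by linarith [(abs_le.1 hratio).2])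
  calc (δ + ε) ^ d * f (δ + ε) = δ ^ d * f δ * ((1 + t) ^ d * (f (δ + ε) / f δ)) := by
        rw [show δ + ε = δ * (1 + t) by simp only [t]; field_simp,
          Real.mul_rpow hδ.le (by positivity)]
        field_simp
    _ ≤ δ ^ d * f δ * (1 + D * t) := by
        gcongr
        exact hprod.trans (by gcongr)
    _ = (1 + D * ε / δ) * (δ ^ d * f δ) := by ring

lemma rpow_mul_le_sub_rpow_mul (hd : 0 ≤ d) (hf : LipschitzOnWith L f (Icc 0 R)) (hm : 0 < m)
    (hmf : ∀ r ∈ Icc 0 R, m ≤ f r) (hδ : 0 < δ) (hε : 0 ≤ ε) (hεδ : ε < δ) (hR : δ ≤ R)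
    (hD : Real.exp d + L * R / m ≤ D) :
    (1 - D * ε / δ) * (δ ^ d * f δ) ≤ (δ - ε) ^ d * f (δ - ε) := by
  have hmem : δ - ε ∈ Icc 0 R := ⟨by linarith, by linarith⟩
  have hfδ : 0 < f δ := hm.trans_le (hmf δ ⟨hδ.le, hR⟩)
  have hratio := hf.abs_div_sub_one_le_mul_div hm hmf hδ hR hmem
  rw [sub_sub_cancel_left, abs_neg, abs_of_nonneg hε] at hratio
  set t := ε / δ
  set K := L * R / m
  have ht₀ : 0 ≤ t := by positivity
  have ht₁ : t < 1 := (div_lt_one hδ).2 hεδ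
  have hK : 0 ≤ K := div_nonneg (mul_nonneg L.coe_nonneg (by linarith)) hm.le
  have hprod : 1 - (Real.exp d + K) * t ≤ (1 - t) ^ d * (f (δ - ε) / f δ) :=
    one_sub_mul_le_mul (Real.rpow_nonneg (by linarith) d)
      (div_nonneg (hm.le.trans (hmf _ hmem)) hfδ.le) (Real.exp_pos d).le hK ht₀
      (Real.one_sub_exp_mul_le_one_sub_rpow hd ht₀ ht₁) (by linarith [(abs_le.1 hratio).1])
  calc (1 - D * ε / δ) * (δ ^ d * f δ) = δ ^ d * f δ * (1 - D * t) := by ring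
    _ ≤ δ ^ d * f δ * ((1 - t) ^ d * (f (δ - ε) / f δ)) := by
        gcongr
        exact (by gcongr : 1 - D * t ≤ _).trans hprod
    _ = (δ - ε) ^ d * f (δ - ε) := by
        rw [show δ - ε = δ * (1 - t) by simp only [t]; field_simp,
          Real.mul_rpow hδ.le (by linarith)]
        field_simp

end RadialVolume

theorem stmt0_general
    {Ginf Gf : Type*}
    [MeasurableSpace Ginf]
    [Group Gf] [TopologicalSpace Gf]
    [LocallyCompactSpace Gf] [SecondCountableTopology Gf]
    [MeasurableSpace Gf]
    (minf : Measure Ginf)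
    (mf : Measure Gf) [Measure.IsHaarMeasure mf]
    (r₀ : ℝ) (hr₀ : 0 < r₀) (d : ℝ) (hd : 0 < d)
    (p : ℝ → ℝ) (L : NNReal) (hp : LipschitzOnWith L p (Icc 0 r₀))
    (hppos : ∀ r ∈ Icc (0:ℝ) r₀, 0 < p r)
    (O : ℝ → Set Ginf)
    (hOvol : ∀ r ∈ Ioc (0:ℝ) r₀, minf (O r) = ENNReal.ofReal (r ^ d * p r)) :
    ∃ D : ℝ, 2 < D ∧
      ∀ B : Set Gf, MeasurableSet B → 0 < mf B → mf B < ⊤ →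
        ∀ δ ε : ℝ, 0 < δ → δ ≤ r₀ / 2 → 0 < ε → ε ≤ δ / 2 →
          (minf.prod mf) ((O (δ + ε)) ×ˢ B)
              ≤ ENNReal.ofReal (1 + D * ε / δ) * (minf.prod mf) ((O δ) ×ˢ B) ∧
          ENNReal.ofReal (1 - D * ε / δ) * (minf.prod mf) ((O δ) ×ˢ B)
              ≤ (minf.prod mf) ((O (δ - ε)) ×ˢ B) := by
  obtain ⟨x₀, hx₀, hmin⟩ := isCompact_Icc.exists_isMinOn (nonempty_Icc.2 hr₀.le) hp.continuousOn
  set K := L * r₀ / p x₀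
  have hK : 0 ≤ K := div_nonneg (mul_nonneg L.coe_nonneg hr₀.le) (hppos x₀ hx₀).le
  have hexpK := mul_nonneg (Real.exp_pos d).le hK
  set D := Real.exp d + K + Real.exp d * K + 3
  refine ⟨D, by linarith [Real.exp_pos d], fun B _ _ _ δ ε hδ hδr₀ hε hεδ => ?_⟩
  have hvol : ∀ r ∈ Ioc 0 r₀, minf.prod mf (O r ×ˢ B) = ENNReal.ofReal (r ^ d * p r) * mf B :=
    fun r hr => by rw [Measure.prod_prod, hOvol r hr]
  have hVδ : 0 ≤ δ ^ d * p δ := by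
    have := hppos δ ⟨hδ.le, by linarith⟩
    positivity
  rw [hvol δ ⟨hδ, by linarith⟩, hvol (δ + ε) ⟨by linarith, by linarith⟩,
    hvol (δ - ε) ⟨by linarith, by linarith⟩, ← mul_assoc, ← mul_assoc,
    ← ENNReal.ofReal_mul (by positivity), ← ENNReal.ofReal_mul' hVδ]
  constructor
  · refine mul_le_mul_left (ENNReal.ofReal_le_ofReal ?_) _
    exact add_rpow_mul_le hd.le hp (hppos x₀ hx₀) hmin hδ hε.le (by linarith) (by linarith)
      (by linarith)
  · refine mul_le_mul_left (ENNReal.ofReal_le_ofReal ?_) _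
    exact rpow_mul_le_sub_rpow_mul hd.le hp (hppos x₀ hx₀) hmin hδ hε.le (by linarith)
      (by linarith) (by linarith)

/-- Regularity of the volume of the variable domains
`Ω_{δ,B} = O_δ × B`:  there is a constant `D > 2` (depending only on the fixed data
`d`, `r₀`, the minimum of `p` and the Lipschitz constant of `p`, but not on `B`)
such that for all `0 < δ ≤ r₀/2` and `0 < ε ≤ δ/2`,
`m(Ω_{δ+ε,B}) ≤ (1 + Dε/δ)·m(Ω_{δ,B})` and `m(Ω_{δ-ε,B}) ≥ (1 - Dε/δ)·m(Ω_{δ,B})`. -/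
theorem stmt0
    {Ginf Gf : Type*}
    [Group Ginf] [TopologicalSpace Ginf] [IsTopologicalGroup Ginf]
    [LocallyCompactSpace Ginf] [SecondCountableTopology Ginf]
    [MeasurableSpace Ginf] [BorelSpace Ginf]
    [Group Gf] [TopologicalSpace Gf] [IsTopologicalGroup Gf]
    [LocallyCompactSpace Gf] [SecondCountableTopology Gf]
    [TotallyDisconnectedSpace Gf]
    [MeasurableSpace Gf] [BorelSpace Gf]
    (minf : Measure Ginf) [Measure.IsHaarMeasure minf]
    (mf : Measure Gf) [Measure.IsHaarMeasure mf]
    (hunimod : (minf.prod mf).IsMulRightInvariant)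
    (r₀ : ℝ) (hr₀ : 0 < r₀) (d : ℝ) (hd : 0 < d)
    (p : ℝ → ℝ) (L : NNReal) (hp : LipschitzOnWith L p (Icc 0 r₀))
    (hppos : ∀ r ∈ Icc (0:ℝ) r₀, 0 < p r)
    (O : ℝ → Set Ginf)
    (hOmeas : ∀ r ∈ Ioc (0:ℝ) r₀, MeasurableSet (O r))
    (hOsymm : ∀ r ∈ Ioc (0:ℝ) r₀, (O r)⁻¹ = O r)
    (hObdd : ∀ r ∈ Ioc (0:ℝ) r₀, IsCompact (closure (O r)))
    (hOnhd : ∀ r ∈ Ioc (0:ℝ) r₀, O r ∈ nhds (1 : Ginf))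
    (hOprod : ∀ r r' : ℝ, 0 < r → 0 < r' → r + r' ≤ r₀ → O r * O r' = O (r + r'))
    (hOvol : ∀ r ∈ Ioc (0:ℝ) r₀, minf (O r) = ENNReal.ofReal (r ^ d * p r)) :
    ∃ D : ℝ, 2 < D ∧
      ∀ B : Set Gf, MeasurableSet B → 0 < mf B → mf B < ⊤ →
        ∀ δ ε : ℝ, 0 < δ → δ ≤ r₀ / 2 → 0 < ε → ε ≤ δ / 2 →
          (minf.prod mf) ((O (δ + ε)) ×ˢ B)
              ≤ ENNReal.ofReal (1 + D * ε / δ) * (minf.prod mf) ((O δ) ×ˢ B) ∧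
          ENNReal.ofReal (1 - D * ε / δ) * (minf.prod mf) ((O δ) ×ˢ B)
              ≤ (minf.prod mf) ((O (δ - ε)) ×ˢ B) :=
  stmt0_general minf mf r₀ hr₀ d hd p L hp hppos O hOvol
end

section
/- Assume W·B·W = B. Then for every δ with 0 < δ ≤ r₀/2, every ε with 0 < ε ≤ δ/4, and every h ∈ U_ε, one has ∫_{Ω_{δ−2ε,B}} φ_ε(g⁻¹hΓ') dm(g) ≤ |sΓt⁻¹ ∩ Ω_{δ,B}| ≤ ∫_{Ω_{δ+2ε,B}} φ_ε(g⁻¹hΓ') dm(g). -/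
/-! For `g ∈ Ω_{b,B}` and `γ ∈ sΓt⁻¹`, the condition `g⁻¹hγ ∈ U_ε` forces
`γ = h⁻¹ g (g⁻¹hγ) ∈ U_ε Ω_{b,B} U_ε ⊆ Ω_{b+2ε,B}`; this is where `W·B·W = B` enters.
Moreover `sΓt⁻¹ ∩ Ω_{b+2ε,B}` is finite: by discreteness of `Γ`, the translates `γV`,
`γ ∈ sΓt⁻¹`, of a small identity neighbourhood `V` are pairwise disjoint, and those with
`γ ∈ Ω_{b+2ε,B}` lie in a set of finite measure. Hence on
`Ω_{b,B}` the lattice sum is a finite sum of the indicators of the sets `hγU_ε`, each of measure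
`m(U_ε)`, and `∫_{Ω_{b,B}} φ_ε(g⁻¹h) = ∑_γ m(Ω_{b,B} ∩ hγU_ε) / m(U_ε)`. For `b = δ - 2ε` only
`γ ∈ Ω_{δ,B}` contribute, each at most `1`; for `b = δ + 2ε` every `γ ∈ Ω_{δ,B}` contributes
exactly `1`, because then `hγU_ε ⊆ Ω_{δ+2ε,B}`. -/

open MeasureTheory Set Pointwise Filter Topology Function

section Discrete

variable {G : Type*} [Group G] [TopologicalSpace G]

theorem Subgroup.exists_nhds_one_eq_one_of_discrete (Γ : Subgroup G) [DiscreteTopology Γ] :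
    ∃ N ∈ 𝓝 (1 : G), ∀ γ ∈ Γ, γ ∈ N → γ = 1 := by
  obtain ⟨N, hN, hΓN⟩ := isOpen_induced_iff.mp (isOpen_discrete ({1} : Set Γ))
  have hmem : ∀ γ : Γ, (γ : G) ∈ N ↔ γ = 1 := fun γ => by
    rw [← mem_preimage, hΓN, mem_singleton_iff]
  exact ⟨N, hN.mem_nhds ((hmem 1).mpr rfl), fun γ hγ hγN =>
    congrArg Subtype.val ((hmem ⟨γ, hγ⟩).mp hγN)⟩

theorem exists_nhds_one_image_mul_mul_inv_separated [IsTopologicalGroup G] (Γ : Subgroup G)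
    [DiscreteTopology Γ] (s t : G) :
    ∃ N ∈ 𝓝 (1 : G), ∀ a ∈ (fun γ => s * γ * t⁻¹) '' (Γ : Set G),
      ∀ b ∈ (fun γ => s * γ * t⁻¹) '' (Γ : Set G), a⁻¹ * b ∈ N → a = b := by
  obtain ⟨N, hN, hΓN⟩ := Γ.exists_nhds_one_eq_one_of_discrete
  have hconj : Continuous fun x : G => t⁻¹ * x * t := by fun_prop
  refine ⟨(fun x => t⁻¹ * x * t) ⁻¹' N,
    hconj.continuousAt.preimage_mem_nhds (by simpa using hN), ?_⟩
  rintro _ ⟨γ₁, hγ₁, rfl⟩ _ ⟨γ₂, hγ₂, rfl⟩ hmem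
  have hquot : γ₁⁻¹ * γ₂ = 1 := by
    refine hΓN _ (Γ.mul_mem (Γ.inv_mem hγ₁) hγ₂) ?_
    simpa [mul_assoc] using hmem
  rw [inv_mul_eq_one.mp hquot]

end Discrete

section Packing

variable {G : Type*} [Group G] [TopologicalSpace G] [IsTopologicalGroup G]
  [MeasurableSpace G] [OpensMeasurableSpace G] [MeasurableMul G]
  {μ : Measure G} [μ.IsMulLeftInvariant] [μ.IsOpenPosMeasure]

theorem finite_inter_of_inv_mul_mem_eq {Λ A V N : Set G} (hN : N ∈ 𝓝 1)
    (hΛ : ∀ a ∈ Λ, ∀ b ∈ Λ, a⁻¹ * b ∈ N → a = b) (hV : V ∈ 𝓝 1) (hAV : μ (A * V) ≠ ⊤) :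
    (Λ ∩ A).Finite := by
  obtain ⟨V₁, hV₁, hV₁closed, hV₁inv, hV₁N⟩ := exists_closed_nhds_one_inv_eq_mul_subset hN
  set V₀ := V₁ ∩ interior V
  have hV₀ : V₀ ∈ 𝓝 1 := inter_mem hV₁ (interior_mem_nhds.mpr hV)
  have hdisj : Pairwise (Disjoint on fun x : ↥(Λ ∩ A) => (x : G) • V₀) := by
    intro x y hxy
    refine disjoint_left.mpr fun g hgx hgy => hxy (Subtype.ext (hΛ _ x.2.1 _ y.2.1 ?_))
    rw [mem_smul_set_iff_inv_smul_mem, smul_eq_mul] at hgx hgy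
    have : (x : G)⁻¹ * g * ((y : G)⁻¹ * g)⁻¹ ∈ V₁ * V₁ :=
      mul_mem_mul hgx.1 (by rw [← hV₁inv]; exact inv_mem_inv.mpr hgy.1)
    simpa [mul_assoc] using hV₁N this
  have hunion : (⋃ x : ↥(Λ ∩ A), (x : G) • V₀) ⊆ A * V := by
    refine iUnion_subset fun x => ?_
    rintro _ ⟨v, hv, rfl⟩
    exact mul_mem_mul x.2.2 (interior_subset hv.2)
  have hfin := Measure.finite_const_le_meas_of_disjoint_iUnion μ (μ.measure_pos_of_mem_nhds hV₀)
    (fun x => (hV₁closed.measurableSet.inter isOpen_interior.measurableSet).const_smul _) hdisj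
    (ne_top_of_le_ne_top hAV (measure_mono hunion))
  simp only [measure_smul, V₀, le_refl, ofPred_true, finite_univ_iff] at hfin
  exact Set.toFinite _

end Packing

section Balls

variable {G : Type*} [Group G] {O : ℝ → Set G} {r₀ : ℝ}

theorem mul_mem_of_mul_eq_add
    (hO : ∀ r r' : ℝ, 0 < r → 0 < r' → r + r' ≤ r₀ → O r * O r' = O (r + r'))
    {a b : ℝ} (ha : 0 < a) (hb : 0 < b) (hab : a + b ≤ r₀) {x y : G} (hx : x ∈ O a)
    (hy : y ∈ O b) : x * y ∈ O (a + b) :=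
  hO a b ha hb hab ▸ mul_mem_mul hx hy

theorem subset_of_le_of_mul_eq_add
    (hO : ∀ r r' : ℝ, 0 < r → 0 < r' → r + r' ≤ r₀ → O r * O r' = O (r + r'))
    (h1 : ∀ r, 0 < r → r ≤ r₀ → (1 : G) ∈ O r) {a b : ℝ} (ha : 0 < a) (hab : a ≤ b)
    (hb : b ≤ r₀) : O a ⊆ O b := by
  rcases hab.eq_or_lt with rfl | hlt
  · exact subset_rfl
  · intro x hx
    simpa using mul_mem_of_mul_eq_add hO ha (sub_pos.mpr hlt) (by linarith) hx
      (h1 (b - a) (sub_pos.mpr hlt) (by linarith))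

theorem mul_mul_mem_prod_of_mul_eq_add {K : Type*} [Group K]
    (hO : ∀ r r' : ℝ, 0 < r → 0 < r' → r + r' ≤ r₀ → O r * O r' = O (r + r'))
    {W B : Set K} (hWBW : W * B * W = B) {ε b : ℝ} (hε : 0 < ε) (hb : 0 < b)
    (hbε : b + 2 * ε ≤ r₀) {u x v : G × K} (hu : u ∈ O ε ×ˢ W) (hx : x ∈ O b ×ˢ B)
    (hv : v ∈ O ε ×ˢ W) : u * x * v ∈ O (b + 2 * ε) ×ˢ B := by
  refine ⟨?_, hWBW ▸ mul_mem_mul (mul_mem_mul hu.2 hx.2) hv.2⟩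
  have hux := mul_mem_of_mul_eq_add hO hε hb (by linarith) hu.1 hx.1
  have := mul_mem_of_mul_eq_add hO (by linarith) hε (by linarith) hux hv.1
  rwa [show ε + b + ε = b + 2 * ε by ring] at this

theorem right_mem_prod_of_inv_mul_mul_mem {K : Type*} [Group K]
    (hO : ∀ r r' : ℝ, 0 < r → 0 < r' → r + r' ≤ r₀ → O r * O r' = O (r + r'))
    {W B : Set K} (hWBW : W * B * W = B) {ε b : ℝ} (hε : 0 < ε) (hb : 0 < b)
    (hbε : b + 2 * ε ≤ r₀) (hsymm : (O ε ×ˢ W)⁻¹ = O ε ×ˢ W) {g h x : G × K}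
    (hh : h ∈ O ε ×ˢ W) (hg : g ∈ O b ×ˢ B) (hghx : g⁻¹ * h * x ∈ O ε ×ˢ W) :
    x ∈ O (b + 2 * ε) ×ˢ B := by
  have := mul_mul_mem_prod_of_mul_eq_add hO hWBW hε hb hbε (hsymm ▸ inv_mem_inv.mpr hh) hg hghx
  rwa [show h⁻¹ * g * (g⁻¹ * h * x) = x by group] at this

theorem left_mem_prod_of_inv_mul_mul_mem {K : Type*} [Group K]
    (hO : ∀ r r' : ℝ, 0 < r → 0 < r' → r + r' ≤ r₀ → O r * O r' = O (r + r'))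
    {W B : Set K} (hWBW : W * B * W = B) {ε b : ℝ} (hε : 0 < ε) (hb : 0 < b)
    (hbε : b + 2 * ε ≤ r₀) (hsymm : (O ε ×ˢ W)⁻¹ = O ε ×ˢ W) {g h x : G × K}
    (hh : h ∈ O ε ×ˢ W) (hx : x ∈ O b ×ˢ B) (hghx : g⁻¹ * h * x ∈ O ε ×ˢ W) :
    g ∈ O (b + 2 * ε) ×ˢ B := by
  have := mul_mul_mem_prod_of_mul_eq_add hO hWBW hε hb hbε hh hx (hsymm ▸ inv_mem_inv.mpr hghx)
  rwa [show h * x * (g⁻¹ * h * x)⁻¹ = g by group] at this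

end Balls

section Comparison

variable {G : Type*} [Group G] [MeasurableSpace G] {μ : Measure G} {U Ω Λ : Set G} {h : G}

theorem measure_setOf_inv_mul_mem [μ.IsMulLeftInvariant] (hUsymm : U⁻¹ = U) (y : G) :
    μ {g | g⁻¹ * y ∈ U} = μ U := by
  have : {g | g⁻¹ * y ∈ U} = y • U := by
    ext g
    rw [mem_smul_set_iff_inv_smul_mem, smul_eq_mul, mem_ofPred_eq, ← Set.inv_mem_inv, mul_inv_rev,
      inv_inv, hUsymm]
  rw [this, measure_smul]

variable [MeasurableMul G] [MeasurableInv G]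

theorem setIntegral_tsum_indicator_eq_sum (hU : MeasurableSet U) (hΩ : MeasurableSet Ω)
    (hΩfin : μ Ω ≠ ⊤) (c : ℝ) {S : Finset G} (hSΛ : ↑S ⊆ Λ)
    (hS : ∀ g ∈ Ω, ∀ x ∈ Λ, g⁻¹ * h * x ∈ U → x ∈ S) :
    ∫ g in Ω, ∑' x : Λ, U.indicator (fun _ => c) (g⁻¹ * h * x) ∂μ
      = ∑ x ∈ S, μ.real (Ω ∩ {g | g⁻¹ * h * x ∈ U}) * c := by
  have hT : ∀ x : G, MeasurableSet {g : G | g⁻¹ * h * x ∈ U} := fun x =>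
    hU.preimage ((measurable_inv.mul_const h).mul_const x)
  have hsum : ∀ g ∈ Ω, ∑' x : Λ, U.indicator (fun _ => c) (g⁻¹ * h * x)
      = ∑ x ∈ S, {g | g⁻¹ * h * x ∈ U}.indicator (fun _ => c) g := by
    intro g hg
    rw [tsum_subtype Λ fun x => U.indicator (fun _ => c) (g⁻¹ * h * x), tsum_eq_sum]
    · refine Finset.sum_congr rfl fun x hx => ?_
      rw [indicator_of_mem (hSΛ hx)]
      rfl
    · intro x hx
      by_cases hxΛ : x ∈ Λ
      · rw [indicator_of_mem hxΛ, indicator_of_notMem fun hU => hx (hS g hg x hxΛ hU)]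
      · exact indicator_of_notMem hxΛ _
  have : IsFiniteMeasure (μ.restrict Ω) := isFiniteMeasure_restrict.mpr hΩfin
  rw [setIntegral_congr_fun hΩ hsum, integral_finsetSum _ fun x _ =>
    (integrable_const c).indicator (hT x)]
  refine Finset.sum_congr rfl fun x _ => ?_
  rw [setIntegral_indicator (hT x), setIntegral_const, smul_eq_mul]

theorem setIntegral_tsum_indicator_le_ncard [μ.IsMulLeftInvariant] (hU : MeasurableSet U)
    (hUsymm : U⁻¹ = U) (hUfin : μ U ≠ ⊤) (hΩ : MeasurableSet Ω) (hΩfin : μ Ω ≠ ⊤) {E : Set G}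
    (hfin : (Λ ∩ E).Finite) (hsupp : ∀ g ∈ Ω, ∀ x ∈ Λ, g⁻¹ * h * x ∈ U → x ∈ E) :
    ∫ g in Ω, ∑' x : Λ, U.indicator (fun _ => (μ U).toReal⁻¹) (g⁻¹ * h * x) ∂μ
      ≤ (Λ ∩ E).ncard := by
  rw [setIntegral_tsum_indicator_eq_sum hU hΩ hΩfin _ (S := hfin.toFinset)
      (by simp [inter_subset_left]) fun g hg x hx hU => by simpa using ⟨hx, hsupp g hg x hx hU⟩,
    ncard_eq_toFinset_card _ hfin, ← nsmul_one, ← Finset.sum_const]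
  refine Finset.sum_le_sum fun x _ => ?_
  have hT : μ {g | g⁻¹ * h * x ∈ U} = μ U := by
    simpa only [mul_assoc] using measure_setOf_inv_mul_mem hUsymm (h * x)
  have hTU : μ.real (Ω ∩ {g | g⁻¹ * h * x ∈ U}) ≤ μ.real U :=
    (measureReal_mono inter_subset_right (hT ▸ hUfin)).trans_eq (congrArg ENNReal.toReal hT)
  calc μ.real (Ω ∩ {g | g⁻¹ * h * x ∈ U}) * (μ U).toReal⁻¹ ≤ μ.real U * (μ.real U)⁻¹ :=
        mul_le_mul_of_nonneg_right hTU (by positivity)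
    _ ≤ 1 := mul_inv_le_one

theorem ncard_le_setIntegral_tsum_indicator [μ.IsMulLeftInvariant] (hU : MeasurableSet U)
    (hUsymm : U⁻¹ = U) (hU0 : μ U ≠ 0) (hUfin : μ U ≠ ⊤) (hΩ : MeasurableSet Ω)
    (hΩfin : μ Ω ≠ ⊤) {E E' : Set G} (hEE' : E ⊆ E') (hfin : (Λ ∩ E').Finite)
    (hsupp : ∀ g ∈ Ω, ∀ x ∈ Λ, g⁻¹ * h * x ∈ U → x ∈ E')
    (hcover : ∀ x ∈ Λ ∩ E, ∀ g, g⁻¹ * h * x ∈ U → g ∈ Ω) :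
    ((Λ ∩ E).ncard : ℝ)
      ≤ ∫ g in Ω, ∑' x : Λ, U.indicator (fun _ => (μ U).toReal⁻¹) (g⁻¹ * h * x) ∂μ := by
  have hfinE : (Λ ∩ E).Finite := hfin.subset (inter_subset_inter_right _ hEE')
  rw [setIntegral_tsum_indicator_eq_sum hU hΩ hΩfin _ (S := hfin.toFinset)
      (by simp [inter_subset_left]) fun g hg x hx hU => by simpa using ⟨hx, hsupp g hg x hx hU⟩,
    ncard_eq_toFinset_card _ hfinE, ← nsmul_one, ← Finset.sum_const]
  calc ∑ x ∈ hfinE.toFinset, (1 : ℝ)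
      = ∑ x ∈ hfinE.toFinset, μ.real (Ω ∩ {g | g⁻¹ * h * x ∈ U}) * (μ U).toReal⁻¹ := by
        refine Finset.sum_congr rfl fun x hx => ?_
        have hT : μ {g | g⁻¹ * h * x ∈ U} = μ U := by
          simpa only [mul_assoc] using measure_setOf_inv_mul_mem hUsymm (h * x)
        have hTΩ : {g | g⁻¹ * h * x ∈ U} ⊆ Ω := fun g => hcover x (hfinE.mem_toFinset.mp hx) g
        rw [inter_eq_right.mpr hTΩ, measureReal_def, hT,
          mul_inv_cancel₀ (ENNReal.toReal_ne_zero.mpr ⟨hU0, hUfin⟩)]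
    _ ≤ ∑ x ∈ hfin.toFinset, μ.real (Ω ∩ {g | g⁻¹ * h * x ∈ U}) * (μ U).toReal⁻¹ :=
        Finset.sum_le_sum_of_subset_of_nonneg
          (hfinE.toFinset_subset_toFinset.mpr (inter_subset_inter_right _ hEE'))
          fun _ _ _ => by positivity

end Comparison

theorem prod_prod_ne_top_of_isCompact_closure {H K : Type*} [TopologicalSpace H]
    [MeasurableSpace H] [MeasurableSpace K] {μ : Measure H} [IsFiniteMeasureOnCompacts μ]
    {ν : Measure K} [SFinite ν] {A : Set H} {B : Set K} (hA : IsCompact (closure A))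
    (hB : ν B ≠ ⊤) : μ.prod ν (A ×ˢ B) ≠ ⊤ := by
  rw [Measure.prod_prod]
  exact ENNReal.mul_ne_top
    (ne_top_of_le_ne_top hA.measure_lt_top.ne (measure_mono subset_closure)) hB

section Product

variable {H K : Type*}
  [Group H] [TopologicalSpace H] [IsTopologicalGroup H] [LocallyCompactSpace H]
  [SecondCountableTopology H] [MeasurableSpace H] [BorelSpace H]
  [Group K] [TopologicalSpace K] [IsTopologicalGroup K] [LocallyCompactSpace K]
  [SecondCountableTopology K] [MeasurableSpace K] [BorelSpace K]

theorem finite_image_mul_mul_inv_inter_prod (μ : Measure H) [μ.IsHaarMeasure] {ν : Measure K}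
    [ν.IsHaarMeasure] (Γ : Subgroup (H × K)) [DiscreteTopology Γ] (s t : H × K) {A V : Set H}
    {B W : Set K} (hA : IsCompact (closure A)) (hV : IsCompact (closure V)) (hVW : V ×ˢ W ∈ 𝓝 1)
    (hBW : B * W ⊆ B) (hB : ν B ≠ ⊤) :
    ((fun γ => s * γ * t⁻¹) '' (Γ : Set (H × K)) ∩ A ×ˢ B).Finite := by
  obtain ⟨N, hN, hΛ⟩ := exists_nhds_one_image_mul_mul_inv_separated Γ s t
  refine finite_inter_of_inv_mul_mem_eq (μ := μ.prod ν) hN hΛ hVW ?_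
  rw [prod_mul_prod_comm, Measure.prod_prod]
  exact ENNReal.mul_ne_top
    (ne_top_of_le_ne_top (hA.mul hV).measure_lt_top.ne
      (measure_mono (mul_subset_mul subset_closure subset_closure)))
    (ne_top_of_le_ne_top hB (measure_mono hBW))

end Product

theorem stmt1_general
    {Ginf Gf : Type*}
    [Group Ginf] [TopologicalSpace Ginf] [IsTopologicalGroup Ginf]
    [LocallyCompactSpace Ginf] [SecondCountableTopology Ginf]
    [MeasurableSpace Ginf] [BorelSpace Ginf]
    [Group Gf] [TopologicalSpace Gf] [IsTopologicalGroup Gf]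
    [LocallyCompactSpace Gf] [SecondCountableTopology Gf]
    [MeasurableSpace Gf] [BorelSpace Gf]
    (minf : Measure Ginf) [Measure.IsHaarMeasure minf]
    (mf : Measure Gf) [Measure.IsHaarMeasure mf]
    (r₀ : ℝ)
    (O : ℝ → Set Ginf)
    (hOmeas : ∀ r ∈ Ioc (0:ℝ) r₀, MeasurableSet (O r))
    (hOsymm : ∀ r ∈ Ioc (0:ℝ) r₀, (O r)⁻¹ = O r)
    (hObdd : ∀ r ∈ Ioc (0:ℝ) r₀, IsCompact (closure (O r)))
    (hOnhd : ∀ r ∈ Ioc (0:ℝ) r₀, O r ∈ nhds (1 : Ginf))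
    (hOprod : ∀ r r' : ℝ, 0 < r → 0 < r' → r + r' ≤ r₀ → O r * O r' = O (r + r'))
    -- the lattice `Γ` and the conjugating elements `s`, `t`
    (Γ : Subgroup (Ginf × Gf)) (hΓdisc : DiscreteTopology Γ)
    (s t : Ginf × Gf)
    -- the compact open subgroup `W` and the set `B`
    (W : Subgroup Gf) (hWcomp : IsCompact (W : Set Gf)) (hWopen : IsOpen (W : Set Gf))
    (B : Set Gf) (hBmeas : MeasurableSet B) (hBfin : mf B < ⊤)
    (hWBW : (W : Set Gf) * B * (W : Set Gf) = B) :
    ∀ δ : ℝ, 0 < δ → δ ≤ r₀ / 2 → ∀ ε : ℝ, 0 < ε → ε ≤ δ / 4 →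
      ∀ h ∈ (O ε) ×ˢ (W : Set Gf),
        (∫ g in (O (δ - 2*ε)) ×ˢ B,
            (∑' γ : ((fun γ : Ginf × Gf => s * γ * t⁻¹) '' (Γ : Set (Ginf × Gf))),
              Set.indicator ((O ε) ×ˢ (W : Set Gf))
                (fun _ => (((minf.prod mf) ((O ε) ×ˢ (W : Set Gf))).toReal)⁻¹)
                (g⁻¹ * h * γ)) ∂(minf.prod mf))
          ≤ (((fun γ : Ginf × Gf => s * γ * t⁻¹) '' (Γ : Set (Ginf × Gf))
                ∩ (O δ) ×ˢ B).ncard : ℝ) ∧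
        (((fun γ : Ginf × Gf => s * γ * t⁻¹) '' (Γ : Set (Ginf × Gf))
              ∩ (O δ) ×ˢ B).ncard : ℝ)
          ≤ ∫ g in (O (δ + 2*ε)) ×ˢ B,
            (∑' γ : ((fun γ : Ginf × Gf => s * γ * t⁻¹) '' (Γ : Set (Ginf × Gf))),
              Set.indicator ((O ε) ×ˢ (W : Set Gf))
                (fun _ => (((minf.prod mf) ((O ε) ×ˢ (W : Set Gf))).toReal)⁻¹)
                (g⁻¹ * h * γ)) ∂(minf.prod mf) := by
  intro δ hδ hδr₀ ε hε hεδ h hh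
  set Λ := (fun γ : Ginf × Gf => s * γ * t⁻¹) '' (Γ : Set (Ginf × Gf))
  have hIoc : ∀ r, 0 < r → r ≤ 2 * δ → r ∈ Ioc 0 r₀ := fun r hr hrδ => ⟨hr, by linarith⟩
  have hεr₀ := hIoc ε hε (by linarith)
  have hΩ : ∀ r ∈ Ioc 0 r₀, MeasurableSet (O r ×ˢ B) := fun r hr => (hOmeas r hr).prod hBmeas
  have hΩfin : ∀ r ∈ Ioc 0 r₀, minf.prod mf (O r ×ˢ B) ≠ ⊤ := fun r hr =>
    prod_prod_ne_top_of_isCompact_closure (hObdd r hr) hBfin.ne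
  have hU : MeasurableSet (O ε ×ˢ (W : Set Gf)) := (hOmeas ε hεr₀).prod hWopen.measurableSet
  have hUsymm : (O ε ×ˢ (W : Set Gf))⁻¹ = O ε ×ˢ W := by
    rw [inv_prod, hOsymm ε hεr₀, inv_coe_set]
  have hUnhd : O ε ×ˢ (W : Set Gf) ∈ 𝓝 1 := prod_mem_nhds (hOnhd ε hεr₀) (hWopen.mem_nhds W.one_mem)
  have hUfin : minf.prod mf (O ε ×ˢ (W : Set Gf)) ≠ ⊤ :=
    prod_prod_ne_top_of_isCompact_closure (hObdd ε hεr₀) hWcomp.measure_lt_top.ne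
  have hBW : B * (W : Set Gf) ⊆ B := by
    conv_rhs => rw [← hWBW]
    exact mul_subset_mul_right (subset_mul_right B W.one_mem)
  have hfin : ∀ r ∈ Ioc 0 r₀, (Λ ∩ O r ×ˢ B).Finite := fun r hr =>
    finite_image_mul_mul_inv_inter_prod minf Γ s t (hObdd r hr) (hObdd ε hεr₀) hUnhd hBW hBfin.ne
  have hδsub := hIoc (δ - 2 * ε) (by linarith) (by linarith)
  have hδadd := hIoc (δ + 2 * ε) (by linarith) (by linarith)
  constructor
  · refine setIntegral_tsum_indicator_le_ncard hU hUsymm hUfin (hΩ _ hδsub) (hΩfin _ hδsub)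
      (hfin δ (hIoc δ hδ (by linarith))) fun g hg x _ hx => ?_
    simpa using
      right_mem_prod_of_inv_mul_mul_mem hOprod hWBW hε hδsub.1 (by linarith) hUsymm hh hg hx
  · have hOδ : O δ ⊆ O (δ + 2 * ε + 2 * ε) := subset_of_le_of_mul_eq_add hOprod
      (fun r hr hrr₀ => mem_of_mem_nhds (hOnhd r ⟨hr, hrr₀⟩)) hδ (by linarith) (by linarith)
    exact ncard_le_setIntegral_tsum_indicator hU hUsymm
      ((minf.prod mf).measure_pos_of_mem_nhds hUnhd).ne' hUfin (hΩ _ hδadd) (hΩfin _ hδadd)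
      (prod_mono hOδ subset_rfl) (hfin _ (hIoc _ (by linarith) (by linarith)))
      (fun g hg x _ hx => right_mem_prod_of_inv_mul_mul_mem hOprod hWBW hε hδadd.1 (by linarith)
        hUsymm hh hg hx)
      (fun x hx g hgx => left_mem_prod_of_inv_mul_mul_mem hOprod hWBW hε hδ (by linarith)
        hUsymm hh hx.2 hgx)

/-- Lemma `comparison`.  With `U_ε = O_ε × W`,
`χ_ε = 1_{U_ε}/m(U_ε)` and `φ_ε(h) = ∑_{γ ∈ sΓt⁻¹} χ_ε(hγ)`, assuming `W·B·W = B`: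
for every `0 < δ ≤ r₀/2`, `0 < ε ≤ δ/4` and `h ∈ U_ε`,
`∫_{Ω_{δ-2ε,B}} φ_ε(g⁻¹h) dm(g) ≤ |sΓt⁻¹ ∩ Ω_{δ,B}| ≤ ∫_{Ω_{δ+2ε,B}} φ_ε(g⁻¹h) dm(g)`. -/
theorem stmt1
    {Ginf Gf : Type*}
    [Group Ginf] [TopologicalSpace Ginf] [IsTopologicalGroup Ginf]
    [LocallyCompactSpace Ginf] [SecondCountableTopology Ginf]
    [MeasurableSpace Ginf] [BorelSpace Ginf]
    [Group Gf] [TopologicalSpace Gf] [IsTopologicalGroup Gf]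
    [LocallyCompactSpace Gf] [SecondCountableTopology Gf]
    [TotallyDisconnectedSpace Gf]
    [MeasurableSpace Gf] [BorelSpace Gf]
    (minf : Measure Ginf) [Measure.IsHaarMeasure minf]
    (mf : Measure Gf) [Measure.IsHaarMeasure mf]
    (hunimod : (minf.prod mf).IsMulRightInvariant)
    (r₀ : ℝ) (hr₀ : 0 < r₀) (d : ℝ) (hd : 0 < d)
    (p : ℝ → ℝ) (L : NNReal) (hp : LipschitzOnWith L p (Icc 0 r₀))
    (hppos : ∀ r ∈ Icc (0:ℝ) r₀, 0 < p r)
    (O : ℝ → Set Ginf)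
    (hOmeas : ∀ r ∈ Ioc (0:ℝ) r₀, MeasurableSet (O r))
    (hOsymm : ∀ r ∈ Ioc (0:ℝ) r₀, (O r)⁻¹ = O r)
    (hObdd : ∀ r ∈ Ioc (0:ℝ) r₀, IsCompact (closure (O r)))
    (hOnhd : ∀ r ∈ Ioc (0:ℝ) r₀, O r ∈ nhds (1 : Ginf))
    (hOprod : ∀ r r' : ℝ, 0 < r → 0 < r' → r + r' ≤ r₀ → O r * O r' = O (r + r'))
    (hOvol : ∀ r ∈ Ioc (0:ℝ) r₀, minf (O r) = ENNReal.ofReal (r ^ d * p r))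
    -- the lattice `Γ` and the conjugating elements `s`, `t`
    (Γ : Subgroup (Ginf × Gf)) (hΓdisc : DiscreteTopology Γ)
    (F : Set (Ginf × Gf)) (hFmeas : MeasurableSet F)
    (hFfund : ∀ g : Ginf × Gf, ∃! γ : Γ, g * (γ : Ginf × Gf) ∈ F)
    (hFfin : (minf.prod mf) F < ⊤)
    (s t : Ginf × Gf)
    -- the compact open subgroup `W` and the set `B`
    (W : Subgroup Gf) (hWcomp : IsCompact (W : Set Gf)) (hWopen : IsOpen (W : Set Gf))
    (B : Set Gf) (hBmeas : MeasurableSet B) (hB0 : 0 < mf B) (hBfin : mf B < ⊤)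
    (hWBW : (W : Set Gf) * B * (W : Set Gf) = B) :
    ∀ δ : ℝ, 0 < δ → δ ≤ r₀ / 2 → ∀ ε : ℝ, 0 < ε → ε ≤ δ / 4 →
      ∀ h ∈ (O ε) ×ˢ (W : Set Gf),
        (∫ g in (O (δ - 2*ε)) ×ˢ B,
            (∑' γ : ((fun γ : Ginf × Gf => s * γ * t⁻¹) '' (Γ : Set (Ginf × Gf))),
              Set.indicator ((O ε) ×ˢ (W : Set Gf))
                (fun _ => (((minf.prod mf) ((O ε) ×ˢ (W : Set Gf))).toReal)⁻¹)
                (g⁻¹ * h * γ)) ∂(minf.prod mf))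
          ≤ (((fun γ : Ginf × Gf => s * γ * t⁻¹) '' (Γ : Set (Ginf × Gf))
                ∩ (O δ) ×ˢ B).ncard : ℝ) ∧
        (((fun γ : Ginf × Gf => s * γ * t⁻¹) '' (Γ : Set (Ginf × Gf))
              ∩ (O δ) ×ˢ B).ncard : ℝ)
          ≤ ∫ g in (O (δ + 2*ε)) ×ˢ B,
            (∑' γ : ((fun γ : Ginf × Gf => s * γ * t⁻¹) '' (Γ : Set (Ginf × Gf))),
              Set.indicator ((O ε) ×ˢ (W : Set Gf))
                (fun _ => (((minf.prod mf) ((O ε) ×ˢ (W : Set Gf))).toReal)⁻¹)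
                (g⁻¹ * h * γ)) ∂(minf.prod mf) :=
  stmt1_general minf mf r₀ O hOmeas hOsymm hObdd hOnhd hOprod Γ hΓdisc s t W hWcomp hWopen B hBmeas
    hBfin hWBW
end

section
/- Assume ε ∈ (0, r₀/2] and that the map u ↦ utΓ is injective on U_{2ε} = U_ε·U_ε. Then φ_ε ∈ L²(X, μ) and ∫_X φ_ε² dμ = 1/(m(U_ε)·V(Γ)). -/
open MeasureTheory Set Pointwise

/-!
Write `U = U_ε`, `Λ = Γ' = sΓs⁻¹` and `b = st⁻¹`, so that `sΓt⁻¹ = Λb`. Injectivity of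
`u ↦ utΓ` on `U·U ⊇ U` says that the projection `π : G → G/Λ` is injective on `Ub⁻¹`; hence for
every `g` at most one `γ ∈ Λb` has `gγ ∈ U`, and `φ_ε` is `m(U)⁻¹` times the indicator of
`A = π(Ub⁻¹)`. Injectivity also makes the translates of `Ub⁻¹` by `Λ` disjoint, so cutting
`π⁻¹A` along the fundamental domain `F'` gives `m(π⁻¹A ∩ F') = m(Ub⁻¹) = m(U)`, i.e.
`μ(A) = m(U)/V`, and `∫ φ_ε² dμ = μ(A)/m(U)² = 1/(m(U)V)`.
-/

namespace QuotientGroup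

variable {G : Type*} [Group G] {Λ : Subgroup G}

theorem mk_mem_image_iff {B : Set G} {g : G} :
    (g : G ⧸ Λ) ∈ (mk : G → G ⧸ Λ) '' B ↔ ∃ γ ∈ Λ, g * γ ∈ B := by
  rw [← mem_preimage, preimage_image_mk]
  simp

theorem tsum_indicator_mul_eq_indicator_image_mk {U : Set G} {b : G}
    (hinj : InjOn (mk : G → G ⧸ Λ) ((· * b) ⁻¹' U)) (c : ℝ) (g : G) :
    ∑' γ : (· * b) '' (Λ : Set G), U.indicator (fun _ => c) (g * γ)
      = ((mk : G → G ⧸ Λ) '' ((· * b) ⁻¹' U)).indicator (fun _ => c) (g : G ⧸ Λ) := by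
  by_cases h : ∃ γ ∈ Λ, g * γ * b ∈ U
  · obtain ⟨γ, hγ, hγU⟩ := h
    rw [indicator_of_mem (mk_mem_image_iff.2 ⟨γ, hγ, hγU⟩),
      tsum_eq_single ⟨γ * b, mem_image_of_mem (· * b) hγ⟩]
    · rw [Subtype.coe_mk, ← mul_assoc, indicator_of_mem hγU]
    rintro ⟨_, δ, hδ, rfl⟩ hne
    refine indicator_of_notMem (fun hδU => hne ?_) _
    have hδγ : g * δ = g * γ := hinj (by simpa [mul_assoc] using hδU) (by simpa using hγU) (by
      simp [mk_mul_of_mem g hδ, mk_mul_of_mem g hγ])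
    simp only [mul_left_cancel hδγ]
  · rw [indicator_of_notMem (fun hg => h (by simpa [mul_assoc] using mk_mem_image_iff.1 hg))]
    refine (tsum_congr fun γ => ?_).trans tsum_zero
    obtain ⟨_, δ, hδ, rfl⟩ := γ
    exact indicator_of_notMem (fun hδU => h ⟨δ, hδ, by rwa [mul_assoc]⟩) _

section Measure

variable [MeasurableSpace G] {m : Measure G}

theorem isFundamentalDomain_op_of_existsUnique {F : Set G} (hF : MeasurableSet F)
    (hfund : ∀ g : G, ∃! γ : Λ, g * γ ∈ F) : IsFundamentalDomain Λ.op F m :=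
  .mk' hF.nullMeasurableSet fun g => (Λ.equivOp.existsUnique_congr fun _ => Iff.rfl).1 (hfund g)

variable [MeasurableMul G] [Countable Λ]

theorem measurableSet_image_mk {B : Set G} (hB : MeasurableSet B) :
    MeasurableSet ((mk : G → G ⧸ Λ) '' B) := by
  rw [measurableSet_quotient]
  change MeasurableSet ((mk : G → G ⧸ Λ) ⁻¹' _)
  rw [preimage_image_mk]
  exact .iUnion fun γ => hB.preimage (measurable_mul_const _)

theorem measure_preimage_image_mk_inter [m.IsMulRightInvariant] {F : Set G}
    (hF : IsFundamentalDomain Λ.op F m) {B : Set G} (hB : MeasurableSet B)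
    (hinj : InjOn (mk : G → G ⧸ Λ) B) :
    m ((mk : G → G ⧸ Λ) ⁻¹' ((mk : G → G ⧸ Λ) '' B) ∩ F) = m B := by
  have hunion : (mk : G → G ⧸ Λ) ⁻¹' ((mk : G → G ⧸ Λ) '' B) ∩ F = ⋃ γ : Λ.op, γ • B ∩ F := by
    rw [preimage_image_mk_eq_iUnion_image, iUnion_inter]
    exact Λ.equivOp.iSup_congr fun _ => rfl
  have hdisj : Pairwise (Function.onFun Disjoint fun γ : Λ.op => γ • B ∩ F) := by
    refine fun γ₁ γ₂ hne => disjoint_left.2 ?_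
    rintro _ ⟨⟨y₁, hy₁, rfl⟩, -⟩ ⟨⟨y₂, hy₂, h⟩, -⟩
    change y₂ * (γ₂ : Gᵐᵒᵖ).unop = y₁ * (γ₁ : Gᵐᵒᵖ).unop at h
    have hy : y₂ = y₁ := hinj hy₂ hy₁ <| by
      rw [← mk_mul_of_mem y₂ γ₂.2, ← mk_mul_of_mem y₁ γ₁.2, h]
    subst hy
    exact hne (Subtype.ext (MulOpposite.unop_injective (mul_left_cancel h))).symm
  rw [hunion, measure_iUnion₀ (hdisj.mono fun _ _ h => h.aedisjoint)
    fun γ => (hB.nullMeasurableSet.smul γ).inter hF.nullMeasurableSet, hF.measure_eq_tsum]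

theorem memLp_two_and_integral_sq_tsum_indicator [m.IsMulRightInvariant] {F : Set G}
    (hF : IsFundamentalDomain Λ.op F m) {V : ℝ} (hV : 0 < V) {μ : Measure (G ⧸ Λ)}
    (hμ : ∀ A : Set (G ⧸ Λ), MeasurableSet A →
      μ A = m (mk ⁻¹' A ∩ F) / ENNReal.ofReal V)
    {U : Set G} (hU : MeasurableSet U) (hU0 : m U ≠ 0) (hUtop : m U ≠ ⊤) {b : G}
    (hinj : InjOn (mk : G → G ⧸ Λ) ((· * b) ⁻¹' U)) :
    MemLp (fun x : G ⧸ Λ => ∑' γ : (· * b) '' (Λ : Set G),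
        U.indicator (fun _ => (m U).toReal⁻¹) (Quotient.out x * γ)) 2 μ ∧
    ∫ x, (∑' γ : (· * b) '' (Λ : Set G),
        U.indicator (fun _ => (m U).toReal⁻¹) (Quotient.out x * γ)) ^ 2 ∂μ
      = ((m U).toReal * V)⁻¹ := by
  have hB : MeasurableSet ((· * b) ⁻¹' U) := hU.preimage (measurable_mul_const b)
  have hA := measurableSet_image_mk (Λ := Λ) hB
  have hμA : μ ((mk : G → G ⧸ Λ) '' ((· * b) ⁻¹' U)) = m U / ENNReal.ofReal V := by
    rw [hμ _ hA, measure_preimage_image_mk_inter hF hB hinj, measure_preimage_mul_right]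
  simp only [tsum_indicator_mul_eq_indicator_image_mk hinj, out_eq']
  refine ⟨memLp_indicator_const 2 hA _ (.inr ?_), ?_⟩
  · rw [hμA]
    exact ENNReal.div_ne_top hUtop (ENNReal.ofReal_pos.2 hV).ne'
  · simp_rw [sq, ← indicator_mul]
    rw [integral_indicator_const _ hA, measureReal_def, hμA, ENNReal.toReal_div,
      ENNReal.toReal_ofReal hV.le, smul_eq_mul]
    have hmU := ENNReal.toReal_pos hU0 hUtop
    field_simp

end Measure
end QuotientGroup

theorem Subgroup.image_mul_mul_inv_eq_image_map_conj {G : Type*} [Group G] (Γ : Subgroup G)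
    (s t : G) :
    (fun γ => s * γ * t⁻¹) '' (Γ : Set G)
      = (· * (s * t⁻¹)) '' (Γ.map (MulAut.conj s).toMonoidHom : Set G) := by
  rw [Subgroup.coe_map, image_image]
  refine image_congr fun γ _ => ?_
  simp [MulAut.conj_apply, mul_assoc]

theorem Subgroup.injOn_mk_map_conj {G : Type*} [Group G] {Γ : Subgroup G} {s t : G}
    {U : Set G} (hinj : InjOn (fun u => ((u * t : G) : G ⧸ Γ)) U) :
    InjOn ((↑) : G → G ⧸ Γ.map (MulAut.conj s).toMonoidHom) ((· * (s * t⁻¹)) ⁻¹' U) := by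
  intro g₁ h₁ g₂ h₂ heq
  rw [QuotientGroup.eq] at heq
  obtain ⟨δ, hδ, hδe⟩ := Subgroup.mem_map.1 heq
  simp only [MulEquiv.coe_toMonoidHom, MulAut.conj_apply] at hδe
  have hu : g₁ * (s * t⁻¹) = g₂ * (s * t⁻¹) := hinj h₁ h₂ <| by
    rw [QuotientGroup.eq, eq_inv_mul_iff_mul_eq.2 hδe.symm]
    convert hδ using 1
    group
  exact mul_right_cancel hu

theorem stmt4_general
    {Ginf Gf : Type*}
    [Group Ginf] [TopologicalSpace Ginf] [IsTopologicalGroup Ginf]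
    [SecondCountableTopology Ginf]
    [MeasurableSpace Ginf] [BorelSpace Ginf]
    [Group Gf] [TopologicalSpace Gf] [IsTopologicalGroup Gf]
    [LocallyCompactSpace Gf] [SecondCountableTopology Gf]
    [MeasurableSpace Gf] [BorelSpace Gf]
    (minf : Measure Ginf)
    (mf : Measure Gf) [Measure.IsHaarMeasure mf]
    (hunimod : (minf.prod mf).IsMulRightInvariant)
    (r₀ : ℝ) (d : ℝ)
    (p : ℝ → ℝ)
    (hppos : ∀ r ∈ Icc (0:ℝ) r₀, 0 < p r)
    (O : ℝ → Set Ginf)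
    (hOmeas : ∀ r ∈ Ioc (0:ℝ) r₀, MeasurableSet (O r))
    (hOnhd : ∀ r ∈ Ioc (0:ℝ) r₀, O r ∈ nhds (1 : Ginf))
    (hOvol : ∀ r ∈ Ioc (0:ℝ) r₀, minf (O r) = ENNReal.ofReal (r ^ d * p r))
    -- the lattice `Γ`, of covolume `V`, and the elements `s`, `t`
    (Γ : Subgroup (Ginf × Gf)) (hΓdisc : DiscreteTopology Γ)
    (V : ℝ) (hV : 0 < V)
    (s t : Ginf × Gf)
    -- `Γ' = sΓs⁻¹`, a lattice of the same covolume `V`, with fundamental domain `F'`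
    (F' : Set (Ginf × Gf)) (hF'meas : MeasurableSet F')
    (hF'fund : ∀ g : Ginf × Gf,
      ∃! γ : Subgroup.map (MulAut.conj s).toMonoidHom Γ, g * (γ : Ginf × Gf) ∈ F')
    -- `μ` is the invariant probability measure on `X = G ⧸ Γ'` induced from `m`
    (μ : Measure ((Ginf × Gf) ⧸ Subgroup.map (MulAut.conj s).toMonoidHom Γ))
    (hμ : ∀ A : Set ((Ginf × Gf) ⧸ Subgroup.map (MulAut.conj s).toMonoidHom Γ),
      MeasurableSet A →
        μ A = (minf.prod mf) ((QuotientGroup.mk ⁻¹' A : Set (Ginf × Gf)) ∩ F')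
                / ENNReal.ofReal V)
    -- the compact open subgroup `W`
    (W : Subgroup Gf) (hWcomp : IsCompact (W : Set Gf)) (hWopen : IsOpen (W : Set Gf))
    -- the parameter `ε` and the injectivity assumption on `U_{2ε} = U_ε·U_ε`
    (ε : ℝ) (hε0 : 0 < ε) (hεr : ε ≤ r₀ / 2)
    (hinj : Set.InjOn
      (fun u : Ginf × Gf => (QuotientGroup.mk (u * t) : (Ginf × Gf) ⧸ Γ))
      (((O ε) ×ˢ (W : Set Gf)) * ((O ε) ×ˢ (W : Set Gf)))) :
    MemLp
      (fun x : (Ginf × Gf) ⧸ Subgroup.map (MulAut.conj s).toMonoidHom Γ =>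
        ∑' γ : ((fun γ : Ginf × Gf => s * γ * t⁻¹) '' (Γ : Set (Ginf × Gf))),
          Set.indicator ((O ε) ×ˢ (W : Set Gf))
            (fun _ => (((minf.prod mf) ((O ε) ×ˢ (W : Set Gf))).toReal)⁻¹)
            (Quotient.out x * γ)) 2 μ ∧
    ∫ x, (∑' γ : ((fun γ : Ginf × Gf => s * γ * t⁻¹) '' (Γ : Set (Ginf × Gf))),
          Set.indicator ((O ε) ×ˢ (W : Set Gf))
            (fun _ => (((minf.prod mf) ((O ε) ×ˢ (W : Set Gf))).toReal)⁻¹)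
            (Quotient.out x * γ)) ^ 2 ∂μ
      = ((((minf.prod mf) ((O ε) ×ˢ (W : Set Gf))).toReal) * V)⁻¹ := by
  have hε : ε ∈ Ioc 0 r₀ := ⟨hε0, by linarith⟩
  have hO : 0 < minf (O ε) := by
    have hpε := hppos ε (Ioc_subset_Icc_self hε)
    rw [hOvol ε hε]
    exact ENNReal.ofReal_pos.2 (by positivity)
  have hOtop : minf (O ε) ≠ ⊤ := by rw [hOvol ε hε]; exact ENNReal.ofReal_ne_top
  have hU1 : (1 : Ginf × Gf) ∈ O ε ×ˢ (W : Set Gf) := ⟨mem_of_mem_nhds (hOnhd ε hε), W.one_mem⟩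
  have : Countable Γ := TopologicalSpace.separableSpace_iff_countable.1 inferInstance
  have : Countable (Γ.map (MulAut.conj s).toMonoidHom) :=
    Countable.of_equiv _ (Γ.equivMapOfInjective _ (MulAut.conj s).injective).toEquiv
  rw [Γ.image_mul_mul_inv_eq_image_map_conj]
  refine QuotientGroup.memLp_two_and_integral_sq_tsum_indicator
    (QuotientGroup.isFundamentalDomain_op_of_existsUnique hF'meas hF'fund) hV hμ
    ((hOmeas ε hε).prod hWopen.measurableSet) ?_ ?_
    (Subgroup.injOn_mk_map_conj (hinj.mono (subset_mul_left _ hU1)))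
  · rw [Measure.prod_prod]
    exact mul_ne_zero hO.ne' (hWopen.measure_pos mf ⟨1, W.one_mem⟩).ne'
  · rw [Measure.prod_prod]
    exact ENNReal.mul_ne_top hOtop hWcomp.measure_lt_top.ne

/-- If `ε ∈ (0, r₀/2]` and `u ↦ utΓ` is injective on
`U_{2ε} = U_ε·U_ε`, then `φ_ε ∈ L²(X, μ)` and `∫_X φ_ε² dμ = 1/(m(U_ε)·V(Γ))`. -/
theorem stmt4
    {Ginf Gf : Type*}
    [Group Ginf] [TopologicalSpace Ginf] [IsTopologicalGroup Ginf]
    [LocallyCompactSpace Ginf] [SecondCountableTopology Ginf]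
    [MeasurableSpace Ginf] [BorelSpace Ginf]
    [Group Gf] [TopologicalSpace Gf] [IsTopologicalGroup Gf]
    [LocallyCompactSpace Gf] [SecondCountableTopology Gf]
    [TotallyDisconnectedSpace Gf]
    [MeasurableSpace Gf] [BorelSpace Gf]
    (minf : Measure Ginf) [Measure.IsHaarMeasure minf]
    (mf : Measure Gf) [Measure.IsHaarMeasure mf]
    (hunimod : (minf.prod mf).IsMulRightInvariant)
    (r₀ : ℝ) (hr₀ : 0 < r₀) (d : ℝ) (hd : 0 < d)
    (p : ℝ → ℝ) (L : NNReal) (hp : LipschitzOnWith L p (Icc 0 r₀))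
    (hppos : ∀ r ∈ Icc (0:ℝ) r₀, 0 < p r)
    (O : ℝ → Set Ginf)
    (hOmeas : ∀ r ∈ Ioc (0:ℝ) r₀, MeasurableSet (O r))
    (hOsymm : ∀ r ∈ Ioc (0:ℝ) r₀, (O r)⁻¹ = O r)
    (hObdd : ∀ r ∈ Ioc (0:ℝ) r₀, IsCompact (closure (O r)))
    (hOnhd : ∀ r ∈ Ioc (0:ℝ) r₀, O r ∈ nhds (1 : Ginf))
    (hOprod : ∀ r r' : ℝ, 0 < r → 0 < r' → r + r' ≤ r₀ → O r * O r' = O (r + r'))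
    (hOvol : ∀ r ∈ Ioc (0:ℝ) r₀, minf (O r) = ENNReal.ofReal (r ^ d * p r))
    -- the lattice `Γ`, of covolume `V`, and the elements `s`, `t`
    (Γ : Subgroup (Ginf × Gf)) (hΓdisc : DiscreteTopology Γ)
    (V : ℝ) (hV : 0 < V)
    (F : Set (Ginf × Gf)) (hFmeas : MeasurableSet F)
    (hFfund : ∀ g : Ginf × Gf, ∃! γ : Γ, g * (γ : Ginf × Gf) ∈ F)
    (hFV : (minf.prod mf) F = ENNReal.ofReal V)
    (s t : Ginf × Gf)
    -- `Γ' = sΓs⁻¹`, a lattice of the same covolume `V`, with fundamental domain `F'`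
    (F' : Set (Ginf × Gf)) (hF'meas : MeasurableSet F')
    (hF'fund : ∀ g : Ginf × Gf,
      ∃! γ : Subgroup.map (MulAut.conj s).toMonoidHom Γ, g * (γ : Ginf × Gf) ∈ F')
    (hF'V : (minf.prod mf) F' = ENNReal.ofReal V)
    -- `μ` is the invariant probability measure on `X = G ⧸ Γ'` induced from `m`
    (μ : Measure ((Ginf × Gf) ⧸ Subgroup.map (MulAut.conj s).toMonoidHom Γ))
    (hμprob : IsProbabilityMeasure μ)
    (hμinv : ∀ g : Ginf × Gf, Measure.map (fun x => g • x) μ = μ)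
    (hμ : ∀ A : Set ((Ginf × Gf) ⧸ Subgroup.map (MulAut.conj s).toMonoidHom Γ),
      MeasurableSet A →
        μ A = (minf.prod mf) ((QuotientGroup.mk ⁻¹' A : Set (Ginf × Gf)) ∩ F')
                / ENNReal.ofReal V)
    -- the compact open subgroup `W`
    (W : Subgroup Gf) (hWcomp : IsCompact (W : Set Gf)) (hWopen : IsOpen (W : Set Gf))
    -- the parameter `ε` and the injectivity assumption on `U_{2ε} = U_ε·U_ε`
    (ε : ℝ) (hε0 : 0 < ε) (hεr : ε ≤ r₀ / 2)
    (hinj : Set.InjOn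
      (fun u : Ginf × Gf => (QuotientGroup.mk (u * t) : (Ginf × Gf) ⧸ Γ))
      (((O ε) ×ˢ (W : Set Gf)) * ((O ε) ×ˢ (W : Set Gf)))) :
    MemLp
      (fun x : (Ginf × Gf) ⧸ Subgroup.map (MulAut.conj s).toMonoidHom Γ =>
        ∑' γ : ((fun γ : Ginf × Gf => s * γ * t⁻¹) '' (Γ : Set (Ginf × Gf))),
          Set.indicator ((O ε) ×ˢ (W : Set Gf))
            (fun _ => (((minf.prod mf) ((O ε) ×ˢ (W : Set Gf))).toReal)⁻¹)
            (Quotient.out x * γ)) 2 μ ∧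
    ∫ x, (∑' γ : ((fun γ : Ginf × Gf => s * γ * t⁻¹) '' (Γ : Set (Ginf × Gf))),
          Set.indicator ((O ε) ×ˢ (W : Set Gf))
            (fun _ => (((minf.prod mf) ((O ε) ×ˢ (W : Set Gf))).toReal)⁻¹)
            (Quotient.out x * γ)) ^ 2 ∂μ
      = ((((minf.prod mf) ((O ε) ×ˢ (W : Set Gf))).toReal) * V)⁻¹ :=
  stmt4_general minf mf hunimod r₀ d p hppos O hOmeas hOnhd hOvol Γ hΓdisc V hV s t F' hF'meas
    hF'fund μ hμ W hWcomp hWopen ε hε0 hεr hinj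
end

section
/- Assume ε ∈ (0, r₀/2] and that both maps u ↦ usΓ and u ↦ utΓ are injective on U_{2ε} = U_ε·U_ε. Then for every η ∈ (0, r₀] there exists h ∈ U_ε such that |π_X(ω_η)φ_ε(hΓ') − 1/V(Γ)| ≤ 2·m(U_ε)⁻¹·E. -/
open MeasureTheory Set Pointwise
open scoped ENNReal NNReal

open Classical in
/-- tsum counting lemma -/
lemma stmt7_tsum_count {G : Type*} [Group G] (S U : Set G) (c : ℝ) (q : G)
    (huniq : ∀ w₁ ∈ S, ∀ w₂ ∈ S, q * w₁ ∈ U → q * w₂ ∈ U → w₁ = w₂) :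
    (∑' w : S, U.indicator (fun _ => c) (q * (w : G))) =
      if ∃ w ∈ S, q * w ∈ U then c else 0 := by
  split_ifs with hex
  · obtain ⟨w₀, hw₀S, hw₀U⟩ := hex
    rw [tsum_eq_single (⟨w₀, hw₀S⟩ : S)]
    · rw [Set.indicator_of_mem hw₀U]
    · rintro ⟨w, hwS⟩ hne
      rw [Set.indicator_of_notMem]
      intro hmem
      exact hne (Subtype.ext (huniq w hwS w₀ hw₀S hmem hw₀U))
  · have : ∀ w : S, U.indicator (fun _ => c) (q * (w : G)) = 0 := by
      rintro ⟨w, hwS⟩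
      rw [Set.indicator_of_notMem]
      exact fun hmem => hex ⟨w, hwS, hmem⟩
    simp [this]

/-- unfolding lemma -/
lemma stmt7_unfold {G : Type*} [Group G] [MeasurableSpace G] [MeasurableMul G]
    (m : Measure G) [m.IsMulRightInvariant]
    (Γ' : Subgroup G) [Countable Γ']
    (F : Set G) (hFmeas : MeasurableSet F)
    (hFfund : ∀ g : G, ∃! γ : Γ', g * (γ : G) ∈ F)
    (D : Set G) (hDmeas : MeasurableSet D)
    (hinj : ∀ d₁ ∈ D, ∀ d₂ ∈ D, d₁⁻¹ * d₂ ∈ Γ' → d₁ = d₂) :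
    m ((⋃ γ : Γ', (fun u => u * (γ : G)⁻¹) ⁻¹' D) ∩ F) = m D := by
  have hmeasA : ∀ γ : Γ', MeasurableSet ((fun u => u * (γ : G)⁻¹) ⁻¹' D) :=
    fun γ => hDmeas.preimage (measurable_mul_const _)
  have hmeasT : ∀ γ : Γ', MeasurableSet ((fun u => u * (γ : G)) ⁻¹' F) :=
    fun γ => hFmeas.preimage (measurable_mul_const _)
  rw [Set.iUnion_inter]
  rw [measure_iUnion ?_ (fun γ => (hmeasA γ).inter hFmeas)]
  · have hterm : ∀ γ : Γ',
        m ((fun u => u * (γ : G)⁻¹) ⁻¹' D ∩ F) =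
          m (D ∩ (fun u => u * (γ : G)) ⁻¹' F) := by
      intro γ
      have : (fun u => u * (γ : G)⁻¹) ⁻¹' D ∩ F =
          (fun u => u * (γ : G)⁻¹) ⁻¹' (D ∩ (fun u => u * (γ : G)) ⁻¹' F) := by
        ext u
        simp [Set.mem_preimage, Set.mem_inter_iff, mul_assoc]
      rw [this, measure_preimage_mul_right]
    simp_rw [hterm]
    rw [← measure_iUnion ?_ (fun γ => hDmeas.inter (hmeasT γ))]
    · congr 1
      rw [← Set.inter_iUnion]
      have : ⋃ γ : Γ', (fun u => u * (γ : G)) ⁻¹' F = Set.univ := by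
        ext u
        simp only [Set.mem_iUnion, Set.mem_preimage, Set.mem_univ, iff_true]
        obtain ⟨γ, hγ, -⟩ := hFfund u
        exact ⟨γ, hγ⟩
      rw [this, Set.inter_univ]
    · intro γ₁ γ₂ hne
      simp only [Function.onFun, Set.disjoint_left]
      rintro u ⟨-, hu1⟩ ⟨-, hu2⟩
      obtain ⟨γ, -, huniq⟩ := hFfund u
      exact hne ((huniq γ₁ hu1).trans (huniq γ₂ hu2).symm)
  · intro γ₁ γ₂ hne
    simp only [Function.onFun, Set.disjoint_left]
    rintro u ⟨hu1, -⟩ ⟨hu2, -⟩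
    have h12 : (u * (γ₁ : G)⁻¹)⁻¹ * (u * (γ₂ : G)⁻¹) ∈ Γ' := by
      have : (u * (γ₁ : G)⁻¹)⁻¹ * (u * (γ₂ : G)⁻¹) = (γ₁ : G) * (γ₂ : G)⁻¹ := by group
      rw [this]
      exact Γ'.mul_mem γ₁.2 (Γ'.inv_mem γ₂.2)
    have heq := hinj _ hu1 _ hu2 h12
    have : (γ₁ : G)⁻¹ = (γ₂ : G)⁻¹ := mul_left_cancel heq
    exact hne (Subtype.ext (inv_injective this))

lemma stmt7_mul2 {G H : Type*} [Group G] [MeasurableSpace G] [Group H] [MeasurableSpace H]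
    [MeasurableMul₂ G] [MeasurableMul₂ H] : MeasurableMul₂ (G × H) :=
  ⟨((measurable_fst.fst.mul measurable_snd.fst).prodMk
    (measurable_fst.snd.mul measurable_snd.snd))⟩

lemma stmt7_inv {G H : Type*} [Group G] [MeasurableSpace G] [Group H] [MeasurableSpace H]
    [MeasurableInv G] [MeasurableInv H] : MeasurableInv (G × H) :=
  ⟨(measurable_fst.inv.prodMk measurable_snd.inv)⟩

theorem stmt7_core {Ginf Gf : Type*}
    [Group Ginf] [MeasurableSpace Ginf] [Group Gf] [MeasurableSpace Gf]
    [MeasurableMul₂ Ginf] [MeasurableInv Ginf] [MeasurableMul₂ Gf] [MeasurableInv Gf]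
    (minf : Measure Ginf) (mf : Measure Gf) [SigmaFinite minf] [SigmaFinite mf]
    [minf.IsMulLeftInvariant] [mf.IsMulLeftInvariant]
    (hunimod : (minf.prod mf).IsMulRightInvariant)
    (Λ : Subgroup (Ginf × Gf)) [Countable Λ]
    (Uε : Set (Ginf × Gf)) (hUεmeas : MeasurableSet Uε)
    (hUεpos : 0 < (minf.prod mf) Uε) (hUεfin : (minf.prod mf) Uε < ⊤)
    (h1Uε : (1 : Ginf × Gf) ∈ Uε)
    (Oη : Set Ginf) (hOηmeas : MeasurableSet Oη)
    (hOηpos : 0 < minf Oη) (hOηfin : minf Oη < ⊤)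
    (B : Set Gf) (hBmeas : MeasurableSet B) (hBfin : mf B < ⊤)
    (F' : Set (Ginf × Gf)) (hF'meas : MeasurableSet F')
    (hF'fund : ∀ g : Ginf × Gf, ∃! γ : Λ, g * (γ : Ginf × Gf) ∈ F')
    (V : ℝ) (hV : 0 < V)
    (μ : Measure ((Ginf × Gf) ⧸ Λ)) [IsProbabilityMeasure μ]
    (hμ : ∀ A : Set ((Ginf × Gf) ⧸ Λ), MeasurableSet A →
        μ A = (minf.prod mf) ((QuotientGroup.mk ⁻¹' A : Set (Ginf × Gf)) ∩ F')
          / ENNReal.ofReal V)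
    (E : ℝ) (hE0 : 0 < E)
    (hEbound : ∀ φ : (Ginf × Gf) ⧸ Λ → ℝ, MemLp φ 2 μ →
      eLpNorm (fun x => (mf B).toReal⁻¹ * ∫ g in B, φ ((((1 : Ginf), g) : Ginf × Gf)⁻¹ • x) ∂mf
          - ∫ y, φ y ∂μ) 2 μ ≤ ENNReal.ofReal E * eLpNorm φ 2 μ)
    (r : Ginf × Gf) (S : Set (Ginf × Gf))
    (hS : S = (fun x => x * r⁻¹) '' (Λ : Set (Ginf × Gf)))
    (hinjr : ∀ u₁ ∈ Uε, ∀ u₂ ∈ Uε, (u₁ * r)⁻¹ * (u₂ * r) ∈ Λ → u₁ = u₂)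
    (hinjΛ : ∀ u₁ ∈ Uε, ∀ u₂ ∈ Uε, u₁⁻¹ * u₂ ∈ Λ → u₁ = u₂) :
    ∃ h ∈ Uε,
      |((minf.prod mf) (Oη ×ˢ B)).toReal⁻¹
          * (∫ g in Oη ×ˢ B,
              (∑' γ : S, Set.indicator Uε (fun _ => (((minf.prod mf) Uε).toReal)⁻¹)
                (Quotient.out (g⁻¹ • (QuotientGroup.mk h : (Ginf × Gf) ⧸ Λ)) * γ))
              ∂(minf.prod mf))
        - V⁻¹| ≤ 2 * (((minf.prod mf) Uε).toReal)⁻¹ * E := by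
  classical
  haveI : (minf.prod mf).IsMulRightInvariant := hunimod
  haveI : MeasurableMul₂ (Ginf × Gf) := stmt7_mul2
  haveI : MeasurableInv (Ginf × Gf) := stmt7_inv
  have hmkmeas : Measurable (QuotientGroup.mk : Ginf × Gf → (Ginf × Gf) ⧸ Λ) :=
    measurable_quotient_mk''
  -- numeric basics
  have hmU0 : (minf.prod mf) Uε ≠ 0 := hUεpos.ne'
  have hmUt : (minf.prod mf) Uε ≠ ⊤ := hUεfin.ne
  have hcpos : 0 < ((minf.prod mf) Uε).toReal := ENNReal.toReal_pos hmU0 hmUt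
  set c : ℝ := (((minf.prod mf) Uε).toReal)⁻¹ with hc
  have hc0 : 0 < c := inv_pos.2 hcpos
  have hofc : ENNReal.ofReal c = ((minf.prod mf) Uε)⁻¹ := by
    rw [hc, ENNReal.ofReal_inv_of_pos hcpos, ENNReal.ofReal_toReal hmUt]
  have hw0 : (ENNReal.ofReal V) ≠ 0 := (ENNReal.ofReal_pos.2 hV).ne'
  have hwt : (ENNReal.ofReal V) ≠ ⊤ := ENNReal.ofReal_ne_top
  have hOη0 : minf Oη ≠ 0 := hOηpos.ne'
  have hOηt : minf Oη ≠ ⊤ := hOηfin.ne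
  have hOηtr : 0 < (minf Oη).toReal := ENNReal.toReal_pos hOη0 hOηt
  -- the basic sets
  set D : Set (Ginf × Gf) := (fun u : Ginf × Gf => u * r⁻¹) ⁻¹' Uε with hD
  have hDmeas : MeasurableSet D := hUεmeas.preimage (measurable_mul_const _)
  set Z : Set (Ginf × Gf) := ⋃ γ : Λ, (fun u : Ginf × Gf => u * (γ : Ginf × Gf)⁻¹) ⁻¹' D with hZ
  have hZmeas : MeasurableSet Z :=
    MeasurableSet.iUnion fun γ => hDmeas.preimage (measurable_mul_const _)
  set Z₀ : Set (Ginf × Gf) :=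
    ⋃ γ : Λ, (fun u : Ginf × Gf => u * (γ : Ginf × Gf)⁻¹) ⁻¹' Uε with hZ₀
  have hZ₀meas : MeasurableSet Z₀ :=
    MeasurableSet.iUnion fun γ => hUεmeas.preimage (measurable_mul_const _)
  -- invariance of Z
  have hZinv : ∀ v : Ginf × Gf, ∀ γ ∈ Λ, (v * γ ∈ Z ↔ v ∈ Z) := by
    intro v γ hγ
    simp only [hZ, Set.mem_iUnion, Set.mem_preimage]
    constructor
    · rintro ⟨δ, hδ⟩
      refine ⟨δ * ⟨γ, hγ⟩⁻¹, ?_⟩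
      have : v * ((δ * ⟨γ, hγ⟩⁻¹ : Λ) : Ginf × Gf)⁻¹ = v * γ * (δ : Ginf × Gf)⁻¹ := by
        push_cast
        group
      rw [this]; exact hδ
    · rintro ⟨δ, hδ⟩
      refine ⟨δ * ⟨γ, hγ⟩, ?_⟩
      have : v * γ * ((δ * ⟨γ, hγ⟩ : Λ) : Ginf × Gf)⁻¹ = v * (δ : Ginf × Gf)⁻¹ := by
        push_cast
        group
      rw [this]; exact hδ
  -- injectivity on D
  have hinjD : ∀ d₁ ∈ D, ∀ d₂ ∈ D, d₁⁻¹ * d₂ ∈ Λ → d₁ = d₂ := by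
    intro d₁ h₁ d₂ h₂ hmem
    have e₁ : d₁ * r⁻¹ * r = d₁ := by group
    have e₂ : d₂ * r⁻¹ * r = d₂ := by group
    have := hinjr (d₁ * r⁻¹) h₁ (d₂ * r⁻¹) h₂ (by rw [e₁, e₂]; exact hmem)
    calc d₁ = d₁ * r⁻¹ * r := e₁.symm
    _ = d₂ * r⁻¹ * r := by rw [this]
    _ = d₂ := e₂
  -- the pointwise counting identity
  have hiff : ∀ q : Ginf × Gf, (∃ w ∈ S, q * w ∈ Uε) ↔ q ∈ Z := by
    intro q
    simp only [hZ, Set.mem_iUnion, Set.mem_preimage, hS]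
    constructor
    · rintro ⟨w, ⟨l', hl', rfl⟩, hw⟩
      refine ⟨(⟨l', hl'⟩ : Λ)⁻¹, ?_⟩
      show q * (((⟨l', hl'⟩ : Λ)⁻¹ : Λ) : Ginf × Gf)⁻¹ * r⁻¹ ∈ Uε
      have : q * (((⟨l', hl'⟩ : Λ)⁻¹ : Λ) : Ginf × Gf)⁻¹ * r⁻¹ = q * (l' * r⁻¹) := by
        push_cast
        group
      rw [this]; exact hw
    · rintro ⟨γ, hγ⟩
      refine ⟨(γ : Ginf × Gf)⁻¹ * r⁻¹, ⟨(γ⁻¹ : Λ), (γ⁻¹ : Λ).2, by push_cast; ring_nf⟩, ?_⟩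
      have : q * ((γ : Ginf × Gf)⁻¹ * r⁻¹) = q * (γ : Ginf × Gf)⁻¹ * r⁻¹ := by group
      rw [this]; exact hγ
  have hcount : ∀ q : Ginf × Gf,
      (∑' w : S, Uε.indicator (fun _ => c) (q * (w : Ginf × Gf))) =
        Z.indicator (fun _ => c) q := by
    intro q
    rw [stmt7_tsum_count S Uε c q ?_]
    · rw [Set.indicator_apply]
      exact if_congr (hiff q) rfl rfl
    · intro w₁ hw₁ w₂ hw₂ hq₁ hq₂
      rw [hS] at hw₁ hw₂
      obtain ⟨l₁, hl₁, rfl⟩ := hw₁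
      obtain ⟨l₂, hl₂, rfl⟩ := hw₂
      have hmem : (q * (l₁ * r⁻¹) * r)⁻¹ * (q * (l₂ * r⁻¹) * r) ∈ Λ := by
        have : (q * (l₁ * r⁻¹) * r)⁻¹ * (q * (l₂ * r⁻¹) * r) = l₁⁻¹ * l₂ := by group
        rw [this]
        exact Λ.mul_mem (Λ.inv_mem hl₁) hl₂
      have := hinjr _ hq₁ _ hq₂ hmem
      exact mul_left_cancel this
  -- representative independence
  have hout : ∀ g h : Ginf × Gf,
      Z.indicator (fun _ => c) (Quotient.out (g⁻¹ • (QuotientGroup.mk h : (Ginf × Gf) ⧸ Λ))) =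
        Z.indicator (fun _ => c) (g⁻¹ * h) := by
    intro g h
    set x : (Ginf × Gf) ⧸ Λ := g⁻¹ • (QuotientGroup.mk h) with hx
    have hmk : (QuotientGroup.mk (g⁻¹ * h) : (Ginf × Gf) ⧸ Λ) = QuotientGroup.mk x.out := by
      rw [QuotientGroup.out_eq']
      rfl
    have hmem : (g⁻¹ * h)⁻¹ * x.out ∈ Λ := QuotientGroup.eq.mp hmk
    have hrep : x.out = (g⁻¹ * h) * ((g⁻¹ * h)⁻¹ * x.out) := by group
    rw [hrep, Set.indicator_apply, Set.indicator_apply]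
    exact if_congr (hZinv _ _ hmem) rfl rfl
  -- the unfolded slice measure
  have hslice : ∀ g : Ginf × Gf,
      (minf.prod mf) ({u : Ginf × Gf | g⁻¹ * u ∈ Z} ∩ F') = (minf.prod mf) Uε := by
    intro g
    have hset : {u : Ginf × Gf | g⁻¹ * u ∈ Z} =
        ⋃ γ : Λ, (fun u : Ginf × Gf => u * (γ : Ginf × Gf)⁻¹) ⁻¹'
          ((fun u : Ginf × Gf => g⁻¹ * u) ⁻¹' D) := by
      ext u
      simp only [hZ, Set.mem_iUnion, Set.mem_setOf_eq, Set.mem_preimage]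
      constructor
      · rintro ⟨γ, hγ⟩
        exact ⟨γ, by rwa [← mul_assoc]⟩
      · rintro ⟨γ, hγ⟩
        exact ⟨γ, by rwa [mul_assoc]⟩
    rw [hset, stmt7_unfold (minf.prod mf) Λ F' hF'meas hF'fund _
      (hDmeas.preimage (measurable_const_mul _)) ?_]
    · rw [show ((fun u : Ginf × Gf => g⁻¹ * u) ⁻¹' D) = (fun u => g⁻¹ * u) ⁻¹' D from rfl,
        measure_preimage_mul, hD, measure_preimage_mul_right]
    · intro d₁ h₁ d₂ h₂ hmem
      have : (g⁻¹ * d₁)⁻¹ * (g⁻¹ * d₂) ∈ Λ := by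
        have heq : (g⁻¹ * d₁)⁻¹ * (g⁻¹ * d₂) = d₁⁻¹ * d₂ := by group
        rw [heq]; exact hmem
      have := hinjD _ h₁ _ h₂ this
      exact mul_left_cancel this
  -- the set Y₀ and its measure
  set Y₀ : Set ((Ginf × Gf) ⧸ Λ) := QuotientGroup.mk '' Uε with hY₀
  have hY₀pre : (QuotientGroup.mk ⁻¹' Y₀ : Set (Ginf × Gf)) = Z₀ := by
    ext u
    simp only [hY₀, Set.mem_preimage, Set.mem_image, hZ₀, Set.mem_iUnion]
    constructor
    · rintro ⟨v, hv, hvu⟩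
      have hmem : v⁻¹ * u ∈ Λ := QuotientGroup.eq.mp hvu
      refine ⟨⟨v⁻¹ * u, hmem⟩, ?_⟩
      show u * (v⁻¹ * u)⁻¹ ∈ Uε
      have : u * (v⁻¹ * u)⁻¹ = v := by group
      rw [this]; exact hv
    · rintro ⟨γ, hγ⟩
      refine ⟨u * (γ : Ginf × Gf)⁻¹, hγ, ?_⟩
      apply QuotientGroup.eq.mpr
      have : (u * (γ : Ginf × Gf)⁻¹)⁻¹ * u = (γ : Ginf × Gf) := by group
      rw [this]; exact γ.2
  have hY₀meas : MeasurableSet Y₀ := by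
    rw [measurableSet_quotient]
    show MeasurableSet (QuotientGroup.mk ⁻¹' Y₀)
    rw [hY₀pre]; exact hZ₀meas
  have hμY₀ : μ Y₀ = (ENNReal.ofReal V)⁻¹ * (minf.prod mf) Uε := by
    rw [hμ Y₀ hY₀meas, hY₀pre, hZ₀,
      stmt7_unfold (minf.prod mf) Λ F' hF'meas hF'fund Uε hUεmeas hinjΛ,
      ENNReal.div_eq_inv_mul]
  -- the measure identification
  have hμmap : μ = (ENNReal.ofReal V)⁻¹ •
      Measure.map QuotientGroup.mk ((minf.prod mf).restrict F') := by
    refine Measure.ext fun A hA => ?_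
    rw [hμ A hA, Measure.smul_apply, smul_eq_mul,
      Measure.map_apply hmkmeas hA, Measure.restrict_apply (hmkmeas hA),
      ENNReal.div_eq_inv_mul]
  -- the function ψ
  set ψ : (Ginf × Gf) ⧸ Λ → ℝ := fun x =>
    ((minf Oη).toReal⁻¹ * c) *
      (minf ({a : Ginf | ((a, (1 : Gf)) : Ginf × Gf)⁻¹ * (Quotient.out x) ∈ Z} ∩ Oη)).toReal
    with hψ
  have haZmeas : ∀ u : Ginf × Gf,
      MeasurableSet {a : Ginf | ((a, (1 : Gf)) : Ginf × Gf)⁻¹ * u ∈ Z} := by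
    intro u
    exact hZmeas.preimage (((measurable_id.prodMk measurable_const).inv).mul measurable_const)
  have hψmk : ∀ u : Ginf × Gf, ψ (QuotientGroup.mk u) =
      ((minf Oη).toReal⁻¹ * c) *
        (minf ({a : Ginf | ((a, (1 : Gf)) : Ginf × Gf)⁻¹ * u ∈ Z} ∩ Oη)).toReal := by
    intro u
    have hmem : u⁻¹ * (Quotient.out (QuotientGroup.mk u : (Ginf × Gf) ⧸ Λ)) ∈ Λ :=
      QuotientGroup.eq.mp (QuotientGroup.out_eq' _).symm
    have hrep : (Quotient.out (QuotientGroup.mk u : (Ginf × Gf) ⧸ Λ)) =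
        u * (u⁻¹ * Quotient.out (QuotientGroup.mk u : (Ginf × Gf) ⧸ Λ)) := by group
    have hsets : {a : Ginf | ((a, (1 : Gf)) : Ginf × Gf)⁻¹ *
          (Quotient.out (QuotientGroup.mk u : (Ginf × Gf) ⧸ Λ)) ∈ Z}
        = {a : Ginf | ((a, (1 : Gf)) : Ginf × Gf)⁻¹ * u ∈ Z} := by
      ext a
      simp only [Set.mem_setOf_eq]
      rw [hrep, ← mul_assoc]
      exact hZinv _ _ hmem
    simp only [hψ, hsets]
  -- nonnegativity and boundedness of ψ
  have hψnn : ∀ x, 0 ≤ ψ x := by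
    intro x
    exact mul_nonneg (mul_nonneg (inv_nonneg.2 ENNReal.toReal_nonneg) hc0.le)
      ENNReal.toReal_nonneg
  have hψle : ∀ x, ψ x ≤ c := by
    intro x
    have h1 : (minf ({a : Ginf | ((a, (1 : Gf)) : Ginf × Gf)⁻¹ * (Quotient.out x) ∈ Z}
        ∩ Oη)).toReal ≤ (minf Oη).toReal :=
      ENNReal.toReal_mono hOηt (measure_mono inter_subset_right)
    calc ψ x ≤ ((minf Oη).toReal⁻¹ * c) * (minf Oη).toReal :=
          mul_le_mul_of_nonneg_left h1
            (mul_nonneg (inv_nonneg.2 ENNReal.toReal_nonneg) hc0.le)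
      _ = c := by
          field_simp
  -- measurability of ψ
  set M : Set ((Ginf × Gf) × Ginf) :=
    {p : (Ginf × Gf) × Ginf | ((p.2, (1 : Gf)) : Ginf × Gf)⁻¹ * p.1 ∈ Z} with hM
  have hMmeas : MeasurableSet M :=
    hZmeas.preimage (((measurable_snd.prodMk measurable_const).inv).mul measurable_fst)
  have hνr : ∀ u : Ginf × Gf,
      minf ({a : Ginf | ((a, (1 : Gf)) : Ginf × Gf)⁻¹ * u ∈ Z} ∩ Oη)
        = (minf.restrict Oη) (Prod.mk u ⁻¹' M) := by
    intro u
    exact (Measure.restrict_apply (show MeasurableSet (Prod.mk u ⁻¹' M) from haZmeas u)).symm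
  have hνmeas : Measurable (fun u : Ginf × Gf =>
      minf ({a : Ginf | ((a, (1 : Gf)) : Ginf × Gf)⁻¹ * u ∈ Z} ∩ Oη)) := by
    simp only [hνr]
    exact measurable_measure_prodMk_left hMmeas
  have hνle : ∀ u : Ginf × Gf,
      minf ({a : Ginf | ((a, (1 : Gf)) : Ginf × Gf)⁻¹ * u ∈ Z} ∩ Oη) ≤ minf Oη :=
    fun u => measure_mono inter_subset_right
  have hψmeas : Measurable ψ := by
    apply measurable_from_quotient.mpr
    have heq : (ψ ∘ (QuotientGroup.mk : Ginf × Gf → (Ginf × Gf) ⧸ Λ)) = fun u =>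
        ((minf Oη).toReal⁻¹ * c) *
          (minf ({a : Ginf | ((a, (1 : Gf)) : Ginf × Gf)⁻¹ * u ∈ Z} ∩ Oη)).toReal :=
      funext hψmk
    show Measurable (ψ ∘ (QuotientGroup.mk : Ginf × Gf → (Ginf × Gf) ⧸ Λ))
    rw [heq]
    exact measurable_const.mul hνmeas.ennreal_toReal
  -- the main lintegral computation
  have hJcore : ∫⁻ u in F',
      minf ({a : Ginf | ((a, (1 : Gf)) : Ginf × Gf)⁻¹ * u ∈ Z} ∩ Oη) ∂(minf.prod mf)
        = (minf.prod mf) Uε * minf Oη := by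
    simp only [hνr]
    rw [← Measure.prod_apply hMmeas, Measure.prod_apply_symm hMmeas]
    have hin : ∀ a : Ginf, ((minf.prod mf).restrict F') ((fun u : Ginf × Gf => (u, a)) ⁻¹' M)
        = (minf.prod mf) Uε := by
      intro a
      rw [Measure.restrict_apply (hMmeas.preimage (measurable_id'.prodMk measurable_const))]
      exact hslice ((a, (1 : Gf)) : Ginf × Gf)
    rw [lintegral_congr hin, lintegral_const, Measure.restrict_apply_univ]
  have hJ : ∫⁻ x, ENNReal.ofReal (ψ x) ∂μ = (ENNReal.ofReal V)⁻¹ := by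
    rw [hμmap, lintegral_smul_measure,
      lintegral_map (show Measurable fun x => ENNReal.ofReal (ψ x) from ENNReal.measurable_ofReal.comp hψmeas) hmkmeas]
    have hre : ∀ u : Ginf × Gf, ENNReal.ofReal (ψ (QuotientGroup.mk u)) =
        (ENNReal.ofReal ((minf Oη).toReal⁻¹ * c)) *
          minf ({a : Ginf | ((a, (1 : Gf)) : Ginf × Gf)⁻¹ * u ∈ Z} ∩ Oη) := by
      intro u
      rw [hψmk u, ENNReal.ofReal_mul
        (mul_nonneg (inv_nonneg.2 ENNReal.toReal_nonneg) hc0.le),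
        ENNReal.ofReal_toReal (lt_of_le_of_lt (hνle u) hOηfin).ne]
    rw [lintegral_congr hre, lintegral_const_mul' _ _ ENNReal.ofReal_ne_top, hJcore]
    have h1 : ENNReal.ofReal ((minf Oη).toReal⁻¹ * c) = (minf Oη)⁻¹ * ((minf.prod mf) Uε)⁻¹ := by
      rw [ENNReal.ofReal_mul (inv_nonneg.2 ENNReal.toReal_nonneg),
        ENNReal.ofReal_inv_of_pos hOηtr, ENNReal.ofReal_toReal hOηt, hofc]
    rw [h1, smul_eq_mul, show (ENNReal.ofReal V)⁻¹ * ((minf Oη)⁻¹ * ((minf.prod mf) Uε)⁻¹ *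
        ((minf.prod mf) Uε * minf Oη)) = (ENNReal.ofReal V)⁻¹ *
          ((((minf.prod mf) Uε)⁻¹ * (minf.prod mf) Uε) * ((minf Oη)⁻¹ * minf Oη)) from by ring,
      ENNReal.inv_mul_cancel hmU0 hmUt, ENNReal.inv_mul_cancel hOη0 hOηt, one_mul, mul_one]
  have hintψ : ∫ y, ψ y ∂μ = V⁻¹ := by
    rw [integral_eq_lintegral_of_nonneg_ae (Filter.Eventually.of_forall hψnn)
      hψmeas.aestronglyMeasurable, hJ, ← ENNReal.ofReal_inv_of_pos hV,
      ENNReal.toReal_ofReal (inv_nonneg.2 hV.le)]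
  -- the L² bound on ψ
  have h2rpow : ∀ x : ℝ≥0∞, x ^ (2 : ℝ) = x * x := by
    intro x
    rw [show (2 : ℝ) = ((2 : ℕ) : ℝ) by norm_num, ENNReal.rpow_natCast, pow_two]
  have heLpψ : eLpNorm ψ 2 μ ≤
      (((minf.prod mf) Uε)⁻¹ * (ENNReal.ofReal V)⁻¹) ^ (1/2 : ℝ) := by
    rw [eLpNorm_eq_lintegral_rpow_enorm_toReal two_ne_zero ENNReal.ofNat_ne_top]
    simp only [ENNReal.toReal_ofNat]
    apply ENNReal.rpow_le_rpow _ (by norm_num : (0:ℝ) ≤ 1/2)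
    calc ∫⁻ x, (‖ψ x‖₊ : ℝ≥0∞) ^ (2:ℝ) ∂μ
        ≤ ∫⁻ x, ENNReal.ofReal c * ENNReal.ofReal (ψ x) ∂μ := by
          apply lintegral_mono
          intro x
          show ‖ψ x‖ₑ ^ (2:ℝ) ≤ ENNReal.ofReal c * ENNReal.ofReal (ψ x)
          rw [Real.enorm_eq_ofReal (hψnn x), h2rpow]
          exact mul_le_mul_left (ENNReal.ofReal_le_ofReal (hψle x)) _
      _ = ENNReal.ofReal c * ∫⁻ x, ENNReal.ofReal (ψ x) ∂μ :=
          lintegral_const_mul' _ _ ENNReal.ofReal_ne_top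
      _ = ((minf.prod mf) Uε)⁻¹ * (ENNReal.ofReal V)⁻¹ := by rw [hofc, hJ]
  have hfinb : (((minf.prod mf) Uε)⁻¹ * (ENNReal.ofReal V)⁻¹) ^ (1/2 : ℝ) < ⊤ := by
    apply ENNReal.rpow_lt_top_of_nonneg (by norm_num : (0:ℝ) ≤ 1/2)
    exact ENNReal.mul_ne_top (ENNReal.inv_ne_top.2 hmU0) (ENNReal.inv_ne_top.2 hw0)
  have hmemψ : MemLp ψ 2 μ := ⟨hψmeas.aestronglyMeasurable, lt_of_le_of_lt heLpψ hfinb⟩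
  -- apply the spectral bound
  have hEb0 := hEbound ψ hmemψ
  simp only [hintψ] at hEb0
  set D₀ : (Ginf × Gf) ⧸ Λ → ℝ := fun x =>
    (mf B).toReal⁻¹ * ∫ g in B, ψ ((((1 : Ginf), g) : Ginf × Gf)⁻¹ • x) ∂mf - V⁻¹ with hD₀
  have hEb : eLpNorm D₀ 2 μ ≤
      ENNReal.ofReal E * (((minf.prod mf) Uε)⁻¹ * (ENNReal.ofReal V)⁻¹) ^ (1/2 : ℝ) :=
    le_trans hEb0 (mul_le_mul_right heLpψ _)
  -- the sets T h
  have hOηBmeas : MeasurableSet (Oη ×ˢ B) := hOηmeas.prod hBmeas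
  have hOηBfin : (minf.prod mf) (Oη ×ˢ B) < ⊤ := by
    rw [Measure.prod_prod]; exact ENNReal.mul_lt_top hOηfin hBfin
  have hpreZmeas : ∀ h : Ginf × Gf, MeasurableSet ((fun g : Ginf × Gf => g⁻¹ * h) ⁻¹' Z) :=
    fun h => hZmeas.preimage (measurable_inv.mul measurable_const)
  set T : (Ginf × Gf) → Set (Ginf × Gf) :=
    fun h => (Oη ×ˢ B) ∩ ((fun g : Ginf × Gf => g⁻¹ * h) ⁻¹' Z) with hT
  have hTmeas : ∀ h, MeasurableSet (T h) := fun h => hOηBmeas.inter (hpreZmeas h)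
  -- identification of the integral in the goal
  have h11a : ∀ h : Ginf × Gf,
      (∫ g in Oη ×ˢ B, (∑' γ : S, Uε.indicator (fun _ => c)
          (Quotient.out (g⁻¹ • (QuotientGroup.mk h : (Ginf × Gf) ⧸ Λ)) * γ)) ∂(minf.prod mf))
        = c * ((minf.prod mf) (T h)).toReal := by
    intro h
    have hig : ∀ g : Ginf × Gf,
        (∑' γ : S, Uε.indicator (fun _ => c)
            (Quotient.out (g⁻¹ • (QuotientGroup.mk h : (Ginf × Gf) ⧸ Λ)) * γ))
          = ((fun g : Ginf × Gf => g⁻¹ * h) ⁻¹' Z).indicator (fun _ => c) g := by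
      intro g
      rw [hcount, hout]
      by_cases hg : g⁻¹ * h ∈ Z
      · rw [Set.indicator_of_mem hg, Set.indicator_of_mem (by exact hg)]
      · rw [Set.indicator_of_notMem hg, Set.indicator_of_notMem (by exact hg)]
    rw [integral_congr_ae (Filter.Eventually.of_forall hig), ← integral_indicator hOηBmeas,
      Set.indicator_indicator, integral_indicator_const _ (hTmeas h), smul_eq_mul, mul_comm, measureReal_def]
  -- identification of D₀ ∘ mk
  set ρ : (Ginf × Gf) → Gf → ℝ≥0∞ := fun h b =>
    minf ({a : Ginf | ((a, b) : Ginf × Gf)⁻¹ * h ∈ Z} ∩ Oη) with hρ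
  have hm2 : ∀ (h : Ginf × Gf) (b : Gf),
      MeasurableSet {a : Ginf | ((a, b) : Ginf × Gf)⁻¹ * h ∈ Z} := by
    intro h b
    exact hZmeas.preimage (((measurable_id.prodMk measurable_const).inv).mul measurable_const)
  have hρle : ∀ h b, ρ h b ≤ minf Oη := fun h b => measure_mono inter_subset_right
  have hρmeas : ∀ h : Ginf × Gf, Measurable (ρ h) := by
    intro h
    have hM2 : MeasurableSet {p : Gf × Ginf | ((p.2, p.1) : Ginf × Gf)⁻¹ * h ∈ Z} :=
      hZmeas.preimage (((measurable_snd.prodMk measurable_fst).inv).mul measurable_const)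
    have heq : ρ h = fun b => (minf.restrict Oη)
        (Prod.mk b ⁻¹' {p : Gf × Ginf | ((p.2, p.1) : Ginf × Gf)⁻¹ * h ∈ Z}) := by
      funext b
      simp only [hρ]
      exact (Measure.restrict_apply (show MeasurableSet
        (Prod.mk b ⁻¹' {p : Gf × Ginf | ((p.2, p.1) : Ginf × Gf)⁻¹ * h ∈ Z}) from
          hm2 h b)).symm
    rw [heq]
    exact measurable_measure_prodMk_left hM2
  have hρint : ∀ h : Ginf × Gf, (minf.prod mf) (T h) = ∫⁻ b in B, ρ h b ∂mf := by
    intro h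
    have h1 : (minf.prod mf) (T h)
        = ((minf.prod mf).restrict (Oη ×ˢ B)) ((fun g : Ginf × Gf => g⁻¹ * h) ⁻¹' Z) := by
      rw [Measure.restrict_apply (hpreZmeas h), inter_comm]
    rw [h1, ← Measure.prod_restrict, Measure.prod_apply_symm (hpreZmeas h)]
    apply lintegral_congr
    intro b
    simp only [hρ]
    exact Measure.restrict_apply (show MeasurableSet
      ((fun x : Ginf => (x, b)) ⁻¹' ((fun g : Ginf × Gf => g⁻¹ * h) ⁻¹' Z)) from
        (hpreZmeas h).preimage (measurable_id'.prodMk measurable_const))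
  have h11b : ∀ h : Ginf × Gf, D₀ (QuotientGroup.mk h)
      = (mf B).toReal⁻¹ * (((minf Oη).toReal⁻¹ * c) * ((minf.prod mf) (T h)).toReal) - V⁻¹ := by
    intro h
    have hb : ∀ b : Gf,
        ψ ((((1 : Ginf), b) : Ginf × Gf)⁻¹ • (QuotientGroup.mk h : (Ginf × Gf) ⧸ Λ))
          = ((minf Oη).toReal⁻¹ * c) * (ρ h b).toReal := by
      intro b
      have hsm : (((1 : Ginf), b) : Ginf × Gf)⁻¹ • (QuotientGroup.mk h : (Ginf × Gf) ⧸ Λ)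
          = QuotientGroup.mk ((((1 : Ginf), b) : Ginf × Gf)⁻¹ * h) := rfl
      have hseteq : {a : Ginf | ((a, (1 : Gf)) : Ginf × Gf)⁻¹ *
            ((((1 : Ginf), b) : Ginf × Gf)⁻¹ * h) ∈ Z}
          = {a : Ginf | ((a, b) : Ginf × Gf)⁻¹ * h ∈ Z} := by
        ext a
        simp only [Set.mem_setOf_eq]
        have heq : ((a, (1 : Gf)) : Ginf × Gf)⁻¹ * ((((1 : Ginf), b) : Ginf × Gf)⁻¹ * h)
            = ((a, b) : Ginf × Gf)⁻¹ * h := by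
          have h1 : (((1 : Ginf), b) : Ginf × Gf) * ((a, (1 : Gf)) : Ginf × Gf)
              = ((a, b) : Ginf × Gf) := by
            simp [Prod.ext_iff]
          rw [← mul_assoc, ← mul_inv_rev, h1]
        rw [heq]
      rw [hsm, hψmk, hseteq]
    have hI : ∫ g in B, ψ ((((1 : Ginf), g) : Ginf × Gf)⁻¹ •
          (QuotientGroup.mk h : (Ginf × Gf) ⧸ Λ)) ∂mf
        = ((minf Oη).toReal⁻¹ * c) * ((minf.prod mf) (T h)).toReal := by
      rw [integral_congr_ae (Filter.Eventually.of_forall hb), integral_const_mul]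
      congr 1
      rw [integral_toReal ((hρmeas h).aemeasurable)
        (Filter.Eventually.of_forall (fun b => lt_of_le_of_lt (hρle h b) hOηfin)),
        ← hρint h]
    simp only [hD₀]
    rw [hI]
  -- putting the two identifications together
  have hgoalid : ∀ h : Ginf × Gf,
      ((minf.prod mf) (Oη ×ˢ B)).toReal⁻¹
          * (∫ g in Oη ×ˢ B, (∑' γ : S, Uε.indicator (fun _ => c)
              (Quotient.out (g⁻¹ • (QuotientGroup.mk h : (Ginf × Gf) ⧸ Λ)) * γ))
            ∂(minf.prod mf))
        - V⁻¹ = D₀ (QuotientGroup.mk h) := by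
    intro h
    rw [h11a h, h11b h, Measure.prod_prod, ENNReal.toReal_mul, mul_inv]
    ring
  -- measurability of D₀
  have hN : MeasurableSet {p : (Ginf × Gf) × (Ginf × Gf) | p.2 ∈ Oη ×ˢ B ∧ p.2⁻¹ * p.1 ∈ Z} :=
    (hOηBmeas.preimage measurable_snd).inter
      (hZmeas.preimage (measurable_snd.inv.mul measurable_fst))
  have hTh : ∀ h : Ginf × Gf, T h = Prod.mk h ⁻¹'
      {p : (Ginf × Gf) × (Ginf × Gf) | p.2 ∈ Oη ×ˢ B ∧ p.2⁻¹ * p.1 ∈ Z} := by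
    intro h
    ext g
    simp only [hT, Set.mem_inter_iff, Set.mem_preimage, Set.mem_setOf_eq]
  have hTmeasfun : Measurable (fun h => (minf.prod mf) (T h)) := by
    simp only [hTh]
    exact measurable_measure_prodMk_left hN
  have hD₀meas : Measurable D₀ := by
    apply measurable_from_quotient.mpr
    have heq : (D₀ ∘ (QuotientGroup.mk : Ginf × Gf → (Ginf × Gf) ⧸ Λ)) = fun h =>
        (mf B).toReal⁻¹ * (((minf Oη).toReal⁻¹ * c) * ((minf.prod mf) (T h)).toReal) - V⁻¹ :=
      funext h11b
    show Measurable (D₀ ∘ (QuotientGroup.mk : Ginf × Gf → (Ginf × Gf) ⧸ Λ))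
    rw [heq]
    exact (measurable_const.mul (measurable_const.mul hTmeasfun.ennreal_toReal)).sub
      measurable_const
  -- Cauchy-Schwarz
  have hCS : ∫⁻ x in Y₀, (‖D₀ x‖₊ : ℝ≥0∞) ∂μ ≤ eLpNorm D₀ 2 μ * (μ Y₀) ^ (1/2 : ℝ) := by
    have hind : ∀ x, Y₀.indicator (fun x => (‖D₀ x‖₊ : ℝ≥0∞)) x
        = (‖D₀ x‖₊ : ℝ≥0∞) * Y₀.indicator (fun _ => (1:ℝ≥0∞)) x := by
      intro x
      by_cases hx : x ∈ Y₀
      · simp [Set.indicator_of_mem hx]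
      · simp [Set.indicator_of_notMem hx]
    rw [← lintegral_indicator hY₀meas, lintegral_congr hind]
    have hCS0 := ENNReal.lintegral_mul_le_Lp_mul_Lq μ
      (show Real.HolderConjugate 2 2 from Real.HolderConjugate.two_two)
      (f := fun x => (‖D₀ x‖₊ : ℝ≥0∞)) (g := Y₀.indicator (fun _ => (1:ℝ≥0∞)))
      hD₀meas.enorm.aemeasurable
      ((measurable_one.indicator hY₀meas).aemeasurable)
    simp only [Pi.mul_apply] at hCS0
    refine le_trans hCS0 ?_
    apply mul_le_mul'
    · apply le_of_eq
      rw [eLpNorm_eq_lintegral_rpow_enorm_toReal two_ne_zero ENNReal.ofNat_ne_top]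
      simp only [ENNReal.toReal_ofNat]
      rfl
    · apply ENNReal.rpow_le_rpow _ (by norm_num : (0:ℝ) ≤ 1/2)
      apply le_of_eq
      have hsq : ∀ x, (Y₀.indicator (fun _ => (1:ℝ≥0∞)) x) ^ (2:ℝ)
          = Y₀.indicator (fun _ => (1:ℝ≥0∞)) x := by
        intro x
        by_cases hx : x ∈ Y₀
        · simp [Set.indicator_of_mem hx, h2rpow]
        · simp [Set.indicator_of_notMem hx, h2rpow]
      rw [lintegral_congr hsq, lintegral_indicator hY₀meas, setLIntegral_const, one_mul]
  -- the pigeonhole argument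
  by_contra hcon
  push_neg at hcon
  have hlow : ∀ x ∈ Y₀, ENNReal.ofReal (2 * c * E) ≤ (‖D₀ x‖₊ : ℝ≥0∞) := by
    rintro x ⟨u, hu, rfl⟩
    have h1 := hcon u hu
    have h2 : 2 * c * E < |D₀ (QuotientGroup.mk u)| := by
      rw [← hgoalid u]
      exact h1
    show ENNReal.ofReal (2 * c * E) ≤ ‖D₀ (QuotientGroup.mk u)‖ₑ
    rw [Real.enorm_eq_ofReal_abs]
    exact ENNReal.ofReal_le_ofReal h2.le
  have hlb : ENNReal.ofReal (2 * c * E) * μ Y₀ ≤ ∫⁻ x in Y₀, (‖D₀ x‖₊ : ℝ≥0∞) ∂μ := by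
    rw [← setLIntegral_const Y₀ (ENNReal.ofReal (2 * c * E))]
    exact setLIntegral_mono hD₀meas.enorm hlow
  have hchain := le_trans (le_trans hlb hCS) (mul_le_mul_left hEb ((μ Y₀) ^ (1/2 : ℝ)))
  rw [hμY₀] at hchain
  set a : ℝ≥0∞ := ENNReal.ofReal E * (ENNReal.ofReal V)⁻¹ with ha
  have ha0 : a ≠ 0 :=
    mul_ne_zero (ENNReal.ofReal_pos.2 hE0).ne' (ENNReal.inv_ne_zero.2 hwt)
  have hat : a ≠ ⊤ := ENNReal.mul_ne_top ENNReal.ofReal_ne_top (ENNReal.inv_ne_top.2 hw0)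
  have hLHS : ENNReal.ofReal (2 * c * E) * ((ENNReal.ofReal V)⁻¹ * (minf.prod mf) Uε)
      = 2 * a := by
    rw [ENNReal.ofReal_mul (by positivity : (0:ℝ) ≤ 2 * c),
      ENNReal.ofReal_mul (by norm_num : (0:ℝ) ≤ 2), ENNReal.ofReal_ofNat, hofc, ha,
      show (2 * ((minf.prod mf) Uε)⁻¹ * ENNReal.ofReal E) *
          ((ENNReal.ofReal V)⁻¹ * (minf.prod mf) Uε)
        = (2 * (ENNReal.ofReal E * (ENNReal.ofReal V)⁻¹)) *
          (((minf.prod mf) Uε)⁻¹ * (minf.prod mf) Uε) from by ring,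
      ENNReal.inv_mul_cancel hmU0 hmUt, mul_one]
  have hRHS : (ENNReal.ofReal E * (((minf.prod mf) Uε)⁻¹ * (ENNReal.ofReal V)⁻¹) ^ (1/2 : ℝ))
        * (((ENNReal.ofReal V)⁻¹ * (minf.prod mf) Uε) ^ (1/2 : ℝ)) = a := by
    rw [mul_assoc, ← ENNReal.mul_rpow_of_ne_top
      (ENNReal.mul_ne_top (ENNReal.inv_ne_top.2 hmU0) (ENNReal.inv_ne_top.2 hw0))
      (ENNReal.mul_ne_top (ENNReal.inv_ne_top.2 hw0) hmUt),
      show (((minf.prod mf) Uε)⁻¹ * (ENNReal.ofReal V)⁻¹) *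
          ((ENNReal.ofReal V)⁻¹ * (minf.prod mf) Uε)
        = ((ENNReal.ofReal V)⁻¹ * (ENNReal.ofReal V)⁻¹) *
          (((minf.prod mf) Uε)⁻¹ * (minf.prod mf) Uε) from by ring,
      ENNReal.inv_mul_cancel hmU0 hmUt, mul_one, ← pow_two, ← ENNReal.rpow_natCast,
      ← ENNReal.rpow_mul]
    norm_num
    exact ha.symm
  rw [hLHS, hRHS] at hchain
  have h21 : (2 : ℝ≥0∞) ≤ 1 := by
    apply (ENNReal.mul_le_mul_iff_left ha0 hat).mp
    rwa [one_mul]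
  exact absurd h21 (by norm_num)

/-- If `ε ∈ (0, r₀/2]` and both `u ↦ usΓ` and `u ↦ utΓ` are injective
on `U_{2ε} = U_ε·U_ε`, then for every `η ∈ (0, r₀]` there exists `h ∈ U_ε` with
`|π_X(ω_η)φ_ε(hΓ') − 1/V(Γ)| ≤ 2·m(U_ε)⁻¹·E`. -/
theorem stmt7
    {Ginf Gf : Type*}
    [Group Ginf] [TopologicalSpace Ginf] [IsTopologicalGroup Ginf]
    [LocallyCompactSpace Ginf] [SecondCountableTopology Ginf]
    [MeasurableSpace Ginf] [BorelSpace Ginf]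
    [Group Gf] [TopologicalSpace Gf] [IsTopologicalGroup Gf]
    [LocallyCompactSpace Gf] [SecondCountableTopology Gf]
    [TotallyDisconnectedSpace Gf]
    [MeasurableSpace Gf] [BorelSpace Gf]
    (minf : Measure Ginf) [Measure.IsHaarMeasure minf]
    (mf : Measure Gf) [Measure.IsHaarMeasure mf]
    (hunimod : (minf.prod mf).IsMulRightInvariant)
    (r₀ : ℝ) (hr₀ : 0 < r₀) (d : ℝ) (hd : 0 < d)
    (p : ℝ → ℝ) (L : NNReal) (hp : LipschitzOnWith L p (Icc 0 r₀))
    (hppos : ∀ r ∈ Icc (0:ℝ) r₀, 0 < p r)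
    (O : ℝ → Set Ginf)
    (hOmeas : ∀ r ∈ Ioc (0:ℝ) r₀, MeasurableSet (O r))
    (hOsymm : ∀ r ∈ Ioc (0:ℝ) r₀, (O r)⁻¹ = O r)
    (hObdd : ∀ r ∈ Ioc (0:ℝ) r₀, IsCompact (closure (O r)))
    (hOnhd : ∀ r ∈ Ioc (0:ℝ) r₀, O r ∈ nhds (1 : Ginf))
    (hOprod : ∀ r r' : ℝ, 0 < r → 0 < r' → r + r' ≤ r₀ → O r * O r' = O (r + r'))
    (hOvol : ∀ r ∈ Ioc (0:ℝ) r₀, minf (O r) = ENNReal.ofReal (r ^ d * p r))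
    -- the set `B ⊆ G_f`
    (B : Set Gf) (hBmeas : MeasurableSet B) (hB0 : 0 < mf B) (hBfin : mf B < ⊤)
    -- the lattice `Γ`, of covolume `V`, and the elements `s`, `t`
    (Γ : Subgroup (Ginf × Gf)) (hΓdisc : DiscreteTopology Γ)
    (V : ℝ) (hV : 0 < V)
    (F : Set (Ginf × Gf)) (hFmeas : MeasurableSet F)
    (hFfund : ∀ g : Ginf × Gf, ∃! γ : Γ, g * (γ : Ginf × Gf) ∈ F)
    (hFV : (minf.prod mf) F = ENNReal.ofReal V)
    (s t : Ginf × Gf)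
    -- `Γ' = sΓs⁻¹`, a lattice of the same covolume `V`, with fundamental domain `F'`
    (F' : Set (Ginf × Gf)) (hF'meas : MeasurableSet F')
    (hF'fund : ∀ g : Ginf × Gf,
      ∃! γ : Subgroup.map (MulAut.conj s).toMonoidHom Γ, g * (γ : Ginf × Gf) ∈ F')
    (hF'V : (minf.prod mf) F' = ENNReal.ofReal V)
    -- `μ` is the invariant probability measure on `X = G ⧸ Γ'` induced from `m`
    (μ : Measure ((Ginf × Gf) ⧸ Subgroup.map (MulAut.conj s).toMonoidHom Γ))
    (hμprob : IsProbabilityMeasure μ)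
    (hμinv : ∀ g : Ginf × Gf, Measure.map (fun x => g • x) μ = μ)
    (hμ : ∀ A : Set ((Ginf × Gf) ⧸ Subgroup.map (MulAut.conj s).toMonoidHom Γ),
      MeasurableSet A →
        μ A = (minf.prod mf) ((QuotientGroup.mk ⁻¹' A : Set (Ginf × Gf)) ∩ F')
                / ENNReal.ofReal V)
    -- the compact open subgroup `W`
    (W : Subgroup Gf) (hWcomp : IsCompact (W : Set Gf)) (hWopen : IsOpen (W : Set Gf))
    -- the operator norm bound with constant `E` for the averages over `B`
    (E : ℝ) (hE0 : 0 < E) (hE1 : E < 1)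
    (hEbound : ∀ φ : (Ginf × Gf) ⧸ Subgroup.map (MulAut.conj s).toMonoidHom Γ → ℝ,
      MemLp φ 2 μ →
      eLpNorm
        (fun x => (mf B).toReal⁻¹ * ∫ g in B, φ ((((1 : Ginf), g) : Ginf × Gf)⁻¹ • x) ∂mf
          - ∫ y, φ y ∂μ) 2 μ
        ≤ ENNReal.ofReal E * eLpNorm φ 2 μ)
    -- the parameter `ε` and the injectivity assumption on `U_{2ε} = U_ε·U_ε`
    (ε : ℝ) (hε0 : 0 < ε) (hεr : ε ≤ r₀ / 2)
    (hinjs : Set.InjOn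
      (fun u : Ginf × Gf => (QuotientGroup.mk (u * s) : (Ginf × Gf) ⧸ Γ))
      (((O ε) ×ˢ (W : Set Gf)) * ((O ε) ×ˢ (W : Set Gf))))
    (hinjt : Set.InjOn
      (fun u : Ginf × Gf => (QuotientGroup.mk (u * t) : (Ginf × Gf) ⧸ Γ))
      (((O ε) ×ˢ (W : Set Gf)) * ((O ε) ×ˢ (W : Set Gf)))) :
    ∀ η : ℝ, 0 < η → η ≤ r₀ →
      ∃ h ∈ (O ε) ×ˢ (W : Set Gf),
        |((minf.prod mf) ((O η) ×ˢ B)).toReal⁻¹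
            * (∫ g in (O η) ×ˢ B,
                (∑' γ : ((fun γ : Ginf × Gf => s * γ * t⁻¹) '' (Γ : Set (Ginf × Gf))),
                  Set.indicator ((O ε) ×ˢ (W : Set Gf))
                    (fun _ => (((minf.prod mf) ((O ε) ×ˢ (W : Set Gf))).toReal)⁻¹)
                    (Quotient.out (g⁻¹ • (QuotientGroup.mk h :
                      (Ginf × Gf) ⧸ Subgroup.map (MulAut.conj s).toMonoidHom Γ)) * γ))
                ∂(minf.prod mf))
          - V⁻¹|
        ≤ 2 * (((minf.prod mf) ((O ε) ×ˢ (W : Set Gf))).toReal)⁻¹ * E := by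
  intro η hη0 hηr
  haveI := hΓdisc
  haveI := hμprob
  have hεIoc : ε ∈ Ioc (0:ℝ) r₀ := ⟨hε0, hεr.trans (by linarith)⟩
  have hηIoc : η ∈ Ioc (0:ℝ) r₀ := ⟨hη0, hηr⟩
  -- countability of Λ
  have hΓcnt : Countable Γ := TopologicalSpace.separableSpace_iff_countable.mp inferInstance
  have hΛset : ((Subgroup.map (MulAut.conj s).toMonoidHom Γ : Subgroup (Ginf × Gf)) : Set (Ginf × Gf)).Countable := by
    rw [Subgroup.coe_map]
    exact (Set.countable_coe_iff.mp hΓcnt).image _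
  haveI : Countable (Subgroup.map (MulAut.conj s).toMonoidHom Γ) := hΛset.to_subtype
  -- measure-theoretic facts
  have hOεmeas := hOmeas ε hεIoc
  have hOεvol := hOvol ε hεIoc
  have hOεpos : 0 < minf (O ε) := by
    rw [hOεvol]
    exact ENNReal.ofReal_pos.2 (mul_pos (Real.rpow_pos_of_pos hε0 d)
      (hppos ε ⟨hε0.le, hεIoc.2⟩))
  have hOεfin : minf (O ε) < ⊤ := by rw [hOεvol]; exact ENNReal.ofReal_lt_top
  have hOηmeas := hOmeas η hηIoc
  have hOηvol := hOvol η hηIoc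
  have hOηpos : 0 < minf (O η) := by
    rw [hOηvol]
    exact ENNReal.ofReal_pos.2 (mul_pos (Real.rpow_pos_of_pos hη0 d)
      (hppos η ⟨hη0.le, hηr⟩))
  have hOηfin : minf (O η) < ⊤ := by rw [hOηvol]; exact ENNReal.ofReal_lt_top
  have hWmeas : MeasurableSet (W : Set Gf) := hWopen.measurableSet
  have hWpos : 0 < mf (W : Set Gf) := hWopen.measure_pos mf ⟨1, W.one_mem⟩
  have hWfin : mf (W : Set Gf) < ⊤ := hWcomp.measure_lt_top
  have hUεmeas : MeasurableSet ((O ε) ×ˢ (W : Set Gf)) := hOεmeas.prod hWmeas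
  have hUεpos : 0 < (minf.prod mf) ((O ε) ×ˢ (W : Set Gf)) := by
    rw [Measure.prod_prod]
    exact ENNReal.mul_pos hOεpos.ne' hWpos.ne'
  have hUεfin : (minf.prod mf) ((O ε) ×ˢ (W : Set Gf)) < ⊤ := by
    rw [Measure.prod_prod]
    exact ENNReal.mul_lt_top hOεfin hWfin
  have h1Uε : (1 : Ginf × Gf) ∈ (O ε) ×ˢ (W : Set Gf) :=
    ⟨mem_of_mem_nhds (hOnhd ε hεIoc), W.one_mem⟩
  have hUU : ∀ u : Ginf × Gf, u ∈ (O ε) ×ˢ (W : Set Gf) →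
      u ∈ ((O ε) ×ˢ (W : Set Gf)) * ((O ε) ×ˢ (W : Set Gf)) := by
    intro u hu
    exact Set.mem_mul.mpr ⟨u, hu, 1, h1Uε, mul_one u⟩
  -- injectivity facts
  have hinjΛ : ∀ u₁ ∈ (O ε) ×ˢ (W : Set Gf), ∀ u₂ ∈ (O ε) ×ˢ (W : Set Gf),
      u₁⁻¹ * u₂ ∈ Subgroup.map (MulAut.conj s).toMonoidHom Γ → u₁ = u₂ := by
    intro u₁ h₁ u₂ h₂ hmem
    obtain ⟨γ, hγ, hγeq⟩ := Subgroup.mem_map.mp hmem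
    have hγeq' : s * γ * s⁻¹ = u₁⁻¹ * u₂ := by
      simpa [MulAut.conj_apply] using hγeq
    refine hinjs (hUU u₁ h₁) (hUU u₂ h₂) ?_
    show (QuotientGroup.mk (u₁ * s) : (Ginf × Gf) ⧸ Γ) = QuotientGroup.mk (u₂ * s)
    refine QuotientGroup.eq.mpr ?_
    have heq : (u₁ * s)⁻¹ * (u₂ * s) = γ := by
      rw [show γ = s⁻¹ * (s * γ * s⁻¹) * s from by group, hγeq']
      group
    rw [heq]; exact hγ
  have hinjr : ∀ u₁ ∈ (O ε) ×ˢ (W : Set Gf), ∀ u₂ ∈ (O ε) ×ˢ (W : Set Gf),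
      (u₁ * (t * s⁻¹))⁻¹ * (u₂ * (t * s⁻¹)) ∈ Subgroup.map (MulAut.conj s).toMonoidHom Γ → u₁ = u₂ := by
    intro u₁ h₁ u₂ h₂ hmem
    obtain ⟨γ, hγ, hγeq⟩ := Subgroup.mem_map.mp hmem
    have hγeq' : s * γ * s⁻¹ = (u₁ * (t * s⁻¹))⁻¹ * (u₂ * (t * s⁻¹)) := by
      simpa [MulAut.conj_apply] using hγeq
    refine hinjt (hUU u₁ h₁) (hUU u₂ h₂) ?_
    show (QuotientGroup.mk (u₁ * t) : (Ginf × Gf) ⧸ Γ) = QuotientGroup.mk (u₂ * t)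
    refine QuotientGroup.eq.mpr ?_
    have heq : (u₁ * t)⁻¹ * (u₂ * t) = γ := by
      rw [show γ = s⁻¹ * (s * γ * s⁻¹) * s from by group, hγeq']
      group
    rw [heq]; exact hγ
  -- identification of the translates set
  have hS : ((fun γ : Ginf × Gf => s * γ * t⁻¹) '' (Γ : Set (Ginf × Gf)))
      = (fun x : Ginf × Gf => x * (t * s⁻¹)⁻¹) ''
          ((Subgroup.map (MulAut.conj s).toMonoidHom Γ : Subgroup (Ginf × Gf)) :
            Set (Ginf × Gf)) := by
    rw [Subgroup.coe_map, ← Set.image_comp]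
    refine Set.image_congr fun γ _ => ?_
    show s * γ * t⁻¹ = ((MulAut.conj s).toMonoidHom γ) * (t * s⁻¹)⁻¹
    simp only [MulEquiv.coe_toMonoidHom, MulAut.conj_apply]
    group
  exact stmt7_core minf mf hunimod (Subgroup.map (MulAut.conj s).toMonoidHom Γ) ((O ε) ×ˢ (W : Set Gf)) hUεmeas hUεpos hUεfin h1Uε
    (O η) hOηmeas hOηpos hOηfin B hBmeas hBfin F' hF'meas hF'fund V hV μ hμ E hE0 hEbound
    (t * s⁻¹) ((fun γ : Ginf × Gf => s * γ * t⁻¹) '' (Γ : Set (Ginf × Gf))) hS hinjr hinjΛ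
end

section
/- Assume W·B·W = B, 0 < δ ≤ r₀/2, 0 < ε ≤ δ/4, and let D > 0 be a constant such that m(Ω_{δ'+ε',B}) ≤ (1 + Dε'/δ')·m(Ω_{δ',B}) for all 0 < δ' ≤ r₀/2 and 0 < ε' ≤ δ'/2. If α > 0 and there exists h ∈ U_ε with (1/m(Ω_{δ+2ε,B})) ∫_{Ω_{δ+2ε,B}} φ_ε(g⁻¹hΓ') dm(g) ≤ 1/V(Γ) + α, then |sΓt⁻¹ ∩ Ω_{δ,B}| ≤ (1/V(Γ) + α)·(1 + 2Dε/δ)·m(Ω_{δ,B}). -/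
open MeasureTheory Set Pointwise

/-- A discrete subgroup meets every compact set in a finite set. -/
theorem aux_discrete_inter_compact_finite {G : Type*} [Group G] [TopologicalSpace G]
    [IsTopologicalGroup G] (Γ : Subgroup G) (hΓ : DiscreteTopology Γ)
    {K : Set G} (hK : IsCompact K) : ((Γ : Set G) ∩ K).Finite := by
  classical
  obtain ⟨V, hVopen, hV⟩ := isOpen_induced_iff.mp (isOpen_discrete ({1} : Set Γ))
  have hV1 : (1 : G) ∈ V := by
    have h1 : (1 : Γ) ∈ Subtype.val ⁻¹' V := by rw [hV]; rfl
    simpa using h1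
  have hVΓ : ∀ γ : G, γ ∈ Γ → γ ∈ V → γ = 1 := by
    intro γ hγ hγV
    have : (⟨γ, hγ⟩ : Γ) ∈ Subtype.val ⁻¹' V := hγV
    rw [hV] at this
    simpa using congrArg Subtype.val this
  obtain ⟨V₁, hV₁, hsplit⟩ := exists_nhds_split_inv (hVopen.mem_nhds hV1)
  obtain ⟨T, -, hTcov⟩ := hK.elim_nhds_subcover (fun x => {y | y / x ∈ V₁}) (by
    intro x hx
    have : ContinuousAt (fun y => y / x) x := (continuous_id.div' continuous_const).continuousAt
    have := this.preimage_mem_nhds (by simpa using hV₁)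
    simpa [Set.preimage, Set.mem_setOf_eq] using this)
  have hcov : ∀ y ∈ (Γ : Set G) ∩ K, ∃ x ∈ T, y / x ∈ V₁ := by
    intro y hy
    have := hTcov hy.2
    simpa using this
  set f : G → G := fun y => if h : ∃ x ∈ T, y / x ∈ V₁ then h.choose else 1 with hf
  have hse : ∀ y ∈ (Γ : Set G) ∩ K, f y ∈ T ∧ y / f y ∈ V₁ := by
    intro y hy
    have h := hcov y hy
    simp only [hf, dif_pos h]
    exact ⟨h.choose_spec.1, h.choose_spec.2⟩
  have hinj : Set.InjOn f ((Γ : Set G) ∩ K) := by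
    intro a ha b hb hab
    have hA := hse a ha; have hB := hse b hb
    have : (a / f a) / (b / f b) ∈ V := hsplit _ hA.2 _ (hab ▸ hB.2)
    rw [hab] at this
    have heq : (a / f b) / (b / f b) = a * b⁻¹ := by
      simp only [div_eq_mul_inv, mul_inv_rev, inv_inv]
      rw [mul_assoc]; congr 1; rw [← mul_assoc]; simp
    rw [heq] at this
    exact mul_inv_eq_one.mp (hVΓ _ (mul_mem ha.1 (inv_mem hb.1)) this)
  have himg : f '' ((Γ : Set G) ∩ K) ⊆ ↑T := by
    rintro - ⟨y, hy, rfl⟩; exact (hse y hy).1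
  exact Set.Finite.of_finite_image (T.finite_toSet.subset himg) hinj


/-- A measurable set of finite Haar measure which is right-invariant under a compact open
subgroup is compact. -/
theorem aux_isCompact_of_mulW {Gf : Type*} [Group Gf] [TopologicalSpace Gf] [IsTopologicalGroup Gf]
    [MeasurableSpace Gf] [BorelSpace Gf]
    (mf : Measure Gf) [Measure.IsHaarMeasure mf]
    (W : Subgroup Gf) (hWcomp : IsCompact (W : Set Gf)) (hWopen : IsOpen (W : Set Gf))
    (B : Set Gf) (hBfin : mf B < ⊤) (hBW : B * (W : Set Gf) ⊆ B) :
    IsCompact B := by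
  classical
  set q : Gf → Gf ⧸ W := QuotientGroup.mk with hq
  have hfiber : ∀ x : Gf, q ⁻¹' {q x} = x • (W : Set Gf) := by
    intro x
    ext y
    simp only [Set.mem_preimage, Set.mem_singleton_iff, Set.mem_smul_set_iff_inv_smul_mem,
      smul_eq_mul, hq]
    rw [eq_comm, QuotientGroup.eq]
    exact Iff.rfl
  have hfibB : ∀ x ∈ B, q ⁻¹' {q x} ⊆ B := by
    intro x hx
    rw [hfiber]
    rintro - ⟨w, hw, rfl⟩
    exact hBW (Set.mul_mem_mul hx hw)
  have hWpos : 0 < mf (W : Set Gf) := hWopen.measure_pos mf ⟨1, one_mem _⟩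
  have hWmeas : MeasurableSet (W : Set Gf) := hWopen.measurableSet
  -- the set of cosets meeting B is finite
  have hSfin : (q '' B).Finite := by
    have hrep : ∀ i : ↥(q '' B), ∃ x ∈ B, q x = ↑i := fun i => by
      obtain ⟨x, hx, hqx⟩ := i.2; exact ⟨x, hx, hqx⟩
    choose rep hrepB hrepq using hrep
    have key : Set.Finite {i : ↥(q '' B) | mf (W : Set Gf) ≤ mf (q ⁻¹' {(↑i : Gf ⧸ W)})} := by
      apply Measure.finite_const_le_meas_of_disjoint_iUnion mf hWpos
        (As := fun i : ↥(q '' B) => q ⁻¹' {(↑i : Gf ⧸ W)})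
      · intro i
        rw [← hrepq i, hfiber]
        exact hWmeas.const_smul (rep i)
      · intro i j hij
        refine Set.disjoint_left.mpr fun y hyi hyj => hij ?_
        apply Subtype.ext
        rw [← hyi, ← hyj]
      · refine ne_top_of_le_ne_top hBfin.ne (measure_mono ?_)
        refine Set.iUnion_subset fun i => ?_
        rw [← hrepq i]
        exact hfibB _ (hrepB i)
    have : {i : ↥(q '' B) | mf (W : Set Gf) ≤ mf (q ⁻¹' {(↑i : Gf ⧸ W)})} = Set.univ := by
      refine Set.eq_univ_of_forall fun i => ?_
      have : mf (q ⁻¹' {(↑i : Gf ⧸ W)}) = mf (W : Set Gf) := by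
        rw [← hrepq i, hfiber, measure_smul]
      simp [Set.mem_setOf_eq, this]
    rw [this, ← Set.finite_coe_iff] at key
    have : Finite ↥(q '' B) := Set.finite_univ_iff.mp key
    exact Set.finite_coe_iff.mp this
  -- B is a finite union of compact cosets
  have hBeq2 : B = ⋃ i ∈ q '' B, q ⁻¹' {i} := by
    apply Set.Subset.antisymm
    · intro y hy
      exact Set.mem_biUnion ⟨y, hy, rfl⟩ rfl
    · refine Set.iUnion₂_subset fun i hi => ?_
      obtain ⟨x, hx, rfl⟩ := hi
      exact hfibB x hx
  rw [hBeq2]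
  apply hSfin.isCompact_biUnion
  intro i hi
  obtain ⟨x, hx, rfl⟩ := hi
  rw [hfiber]
  exact hWcomp.smul x


/-- Upper bound step: if `W·B·W = B`, `0 < δ ≤ r₀/2`, `0 < ε ≤ δ/4`,
`D > 0` satisfies the upper volume-regularity property, `α > 0`, and there is `h ∈ U_ε`
with `(1/m(Ω_{δ+2ε,B})) ∫_{Ω_{δ+2ε,B}} φ_ε(g⁻¹hΓ') dm(g) ≤ 1/V(Γ) + α`, then
`|sΓt⁻¹ ∩ Ω_{δ,B}| ≤ (1/V(Γ) + α)·(1 + 2Dε/δ)·m(Ω_{δ,B})`. -/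
theorem stmt8
    {Ginf Gf : Type*}
    [Group Ginf] [TopologicalSpace Ginf] [IsTopologicalGroup Ginf]
    [LocallyCompactSpace Ginf] [SecondCountableTopology Ginf]
    [MeasurableSpace Ginf] [BorelSpace Ginf]
    [Group Gf] [TopologicalSpace Gf] [IsTopologicalGroup Gf]
    [LocallyCompactSpace Gf] [SecondCountableTopology Gf]
    [TotallyDisconnectedSpace Gf]
    [MeasurableSpace Gf] [BorelSpace Gf]
    (minf : Measure Ginf) [Measure.IsHaarMeasure minf]
    (mf : Measure Gf) [Measure.IsHaarMeasure mf]
    (hunimod : (minf.prod mf).IsMulRightInvariant)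
    (r₀ : ℝ) (hr₀ : 0 < r₀) (d : ℝ) (hd : 0 < d)
    (p : ℝ → ℝ) (L : NNReal) (hp : LipschitzOnWith L p (Icc 0 r₀))
    (hppos : ∀ r ∈ Icc (0:ℝ) r₀, 0 < p r)
    (O : ℝ → Set Ginf)
    (hOmeas : ∀ r ∈ Ioc (0:ℝ) r₀, MeasurableSet (O r))
    (hOsymm : ∀ r ∈ Ioc (0:ℝ) r₀, (O r)⁻¹ = O r)
    (hObdd : ∀ r ∈ Ioc (0:ℝ) r₀, IsCompact (closure (O r)))
    (hOnhd : ∀ r ∈ Ioc (0:ℝ) r₀, O r ∈ nhds (1 : Ginf))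
    (hOprod : ∀ r r' : ℝ, 0 < r → 0 < r' → r + r' ≤ r₀ → O r * O r' = O (r + r'))
    (hOvol : ∀ r ∈ Ioc (0:ℝ) r₀, minf (O r) = ENNReal.ofReal (r ^ d * p r))
    -- the lattice `Γ`, of covolume `V`, and the elements `s`, `t`
    (Γ : Subgroup (Ginf × Gf)) (hΓdisc : DiscreteTopology Γ)
    (V : ℝ) (hV : 0 < V)
    (F : Set (Ginf × Gf)) (hFmeas : MeasurableSet F)
    (hFfund : ∀ g : Ginf × Gf, ∃! γ : Γ, g * (γ : Ginf × Gf) ∈ F)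
    (hFV : (minf.prod mf) F = ENNReal.ofReal V)
    (s t : Ginf × Gf)
    -- the compact open subgroup `W` and the set `B`
    (W : Subgroup Gf) (hWcomp : IsCompact (W : Set Gf)) (hWopen : IsOpen (W : Set Gf))
    (B : Set Gf) (hBmeas : MeasurableSet B) (hB0 : 0 < mf B) (hBfin : mf B < ⊤)
    (hWBW : (W : Set Gf) * B * (W : Set Gf) = B)
    -- the parameters `δ`, `ε` and the regularity constant `D`
    (δ ε : ℝ) (hδ0 : 0 < δ) (hδr : δ ≤ r₀ / 2) (hε0 : 0 < ε) (hεδ : ε ≤ δ / 4)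
    (D : ℝ) (hD0 : 0 < D)
    (hDreg : ∀ δ' ε' : ℝ, 0 < δ' → δ' ≤ r₀ / 2 → 0 < ε' → ε' ≤ δ' / 2 →
      (minf.prod mf) ((O (δ' + ε')) ×ˢ B)
        ≤ ENNReal.ofReal (1 + D * ε' / δ') * (minf.prod mf) ((O δ') ×ˢ B))
    -- the averaging bound at some point `h ∈ U_ε`
    (α : ℝ) (hα : 0 < α)
    (havg : ∃ h ∈ (O ε) ×ˢ (W : Set Gf),
      (((minf.prod mf) ((O (δ + 2*ε)) ×ˢ B)).toReal)⁻¹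
          * ∫ g in (O (δ + 2*ε)) ×ˢ B,
              (∑' γ : ((fun γ : Ginf × Gf => s * γ * t⁻¹) '' (Γ : Set (Ginf × Gf))),
                Set.indicator ((O ε) ×ˢ (W : Set Gf))
                  (fun _ => (((minf.prod mf) ((O ε) ×ˢ (W : Set Gf))).toReal)⁻¹)
                  (g⁻¹ * h * γ)) ∂(minf.prod mf)
        ≤ 1 / V + α) :
    (((fun γ : Ginf × Gf => s * γ * t⁻¹) '' (Γ : Set (Ginf × Gf))
        ∩ (O δ) ×ˢ B).ncard : ℝ)
      ≤ (1 / V + α) * (1 + 2 * D * ε / δ) * ((minf.prod mf) ((O δ) ×ˢ B)).toReal := by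
  classical
  obtain ⟨h, hhU, havg⟩ := havg
  set μ : Measure (Ginf × Gf) := minf.prod mf with hμdef
  set Λ : Set (Ginf × Gf) := (fun γ : Ginf × Gf => s * γ * t⁻¹) '' (Γ : Set (Ginf × Gf))
    with hΛdef
  set U : Set (Ginf × Gf) := (O ε) ×ˢ (W : Set Gf) with hUdef
  set Ω' : Set (Ginf × Gf) := (O (δ + 2*ε)) ×ˢ B with hΩ'def
  set Ωδ : Set (Ginf × Gf) := (O δ) ×ˢ B with hΩδdef
  set c : ℝ := ((μ U).toReal)⁻¹ with hcdef
  -- ranges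
  have hrε : ε ∈ Ioc (0:ℝ) r₀ := ⟨hε0, by linarith⟩
  have hrδ : δ ∈ Ioc (0:ℝ) r₀ := ⟨hδ0, by linarith⟩
  have hrδ2 : δ + 2*ε ∈ Ioc (0:ℝ) r₀ := ⟨by linarith, by linarith⟩
  have hrδ4 : δ + 4*ε ∈ Ioc (0:ℝ) r₀ := ⟨by linarith, by linarith⟩
  -- measure basics for the O's
  have hOpos : ∀ r ∈ Ioc (0:ℝ) r₀, 0 < minf (O r) := by
    intro r hr
    obtain ⟨Vo, hVsub, hVopen, hV1⟩ := mem_nhds_iff.mp (hOnhd r hr)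
    exact lt_of_lt_of_le (hVopen.measure_pos minf ⟨1, hV1⟩) (measure_mono hVsub)
  have hOfin : ∀ r ∈ Ioc (0:ℝ) r₀, minf (O r) < ⊤ := fun r hr =>
    lt_of_le_of_lt (measure_mono subset_closure) ((hObdd r hr).measure_lt_top)
  have hWpos : 0 < mf (W : Set Gf) := hWopen.measure_pos mf ⟨1, one_mem _⟩
  have hWfin : mf (W : Set Gf) < ⊤ := hWcomp.measure_lt_top
  have hμprod : ∀ (a : Set Ginf) (b : Set Gf), μ (a ×ˢ b) = minf a * mf b :=
    fun a b => Measure.prod_prod a b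
  have hUpos : 0 < μ U := by
    rw [hUdef, hμprod]
    exact ENNReal.mul_pos (hOpos ε hrε).ne' hWpos.ne'
  have hUfin : μ U < ⊤ := by
    rw [hUdef, hμprod]
    exact ENNReal.mul_lt_top (hOfin ε hrε) hWfin
  have hΩ'pos : 0 < μ Ω' := by
    rw [hΩ'def, hμprod]
    exact ENNReal.mul_pos (hOpos _ hrδ2).ne' hB0.ne'
  have hΩ'fin : μ Ω' < ⊤ := by
    rw [hΩ'def, hμprod]
    exact ENNReal.mul_lt_top (hOfin _ hrδ2) hBfin
  have hΩδfin : μ Ωδ < ⊤ := by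
    rw [hΩδdef, hμprod]
    exact ENNReal.mul_lt_top (hOfin _ hrδ) hBfin
  have hcpos : 0 < c := by
    rw [hcdef]
    exact inv_pos.mpr (ENNReal.toReal_pos hUpos.ne' hUfin.ne)
  -- B is compact
  have hBW : B * (W : Set Gf) ⊆ B := by
    have h1 : B ⊆ (W : Set Gf) * B := fun b hb => ⟨1, one_mem _, b, hb, one_mul b⟩
    calc B * (W:Set Gf) ⊆ ((W:Set Gf) * B) * (W:Set Gf) := Set.mul_subset_mul_right h1
    _ = B := hWBW
  have hBcompact : IsCompact B := aux_isCompact_of_mulW mf W hWcomp hWopen B hBfin hBW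
  -- multiplication helpers
  have hOmul : ∀ r r' : ℝ, 0 < r → 0 < r' → r + r' ≤ r₀ →
      ∀ a ∈ O r, ∀ b ∈ O r', a*b ∈ O (r+r') := fun r r' hr hr' hrr a ha b hb =>
    (hOprod r r' hr hr' hrr) ▸ Set.mul_mem_mul ha hb
  have hOmul3 : ∀ r1 r2 r3 : ℝ, 0 < r1 → 0 < r2 → 0 < r3 → r1+r2+r3 ≤ r₀ →
      ∀ a ∈ O r1, ∀ b ∈ O r2, ∀ e ∈ O r3, a*b*e ∈ O (r1+r2+r3) := by
    intro r1 r2 r3 h1 h2 h3 hsum a ha b hb e he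
    exact hOmul (r1+r2) r3 (by linarith) h3 hsum _
      (hOmul r1 r2 h1 h2 (by linarith) a ha b hb) e he
  have hWmulB : ∀ w1 ∈ (W : Set Gf), ∀ b ∈ B, ∀ w2 ∈ (W : Set Gf), w1*b*w2 ∈ B :=
    fun w1 hw1 b hb w2 hw2 =>
      hWBW ▸ Set.mul_mem_mul (Set.mul_mem_mul hw1 hb) hw2
  -- symmetry of U
  have hOεsym : ∀ a : Ginf, a ∈ O ε → a⁻¹ ∈ O ε := by
    intro a ha
    rw [← hOsymm ε hrε]
    exact Set.inv_mem_inv.mpr ha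
  have hUsym : ∀ x : Ginf × Gf, x ∈ U → x⁻¹ ∈ U := by
    rintro ⟨x1, x2⟩ ⟨hx1, hx2⟩
    exact ⟨hOεsym x1 hx1, inv_mem hx2⟩
  have hh1 : h.1 ∈ O ε := hhU.1
  have hh2 : h.2 ∈ (W : Set Gf) := hhU.2
  -- finiteness of Λ ∩ compact sets
  have hΛK : ∀ K : Set (Ginf × Gf), IsCompact K → (Λ ∩ K).Finite := by
    intro K hK
    have hsub : Λ ∩ K ⊆ (fun γ : Ginf × Gf => s * γ * t⁻¹) ''
        ((Γ : Set (Ginf × Gf)) ∩ ((fun x => s⁻¹ * x * t) '' K)) := by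
      rintro x ⟨⟨γ, hγ, rfl⟩, hxK⟩
      exact ⟨γ, ⟨hγ, ⟨s*γ*t⁻¹, hxK, by group⟩⟩, rfl⟩
    refine Set.Finite.subset (Set.Finite.image _ ?_) hsub
    exact aux_discrete_inter_compact_finite Γ hΓdisc
      (hK.image ((continuous_const.mul continuous_id).mul continuous_const))
  -- the big finite index set
  have hSbig : (Λ ∩ (O (δ+4*ε)) ×ˢ B).Finite := by
    refine Set.Finite.subset (hΛK ((closure (O (δ+4*ε))) ×ˢ B)
      ((hObdd _ hrδ4).prod hBcompact)) ?_
    exact Set.inter_subset_inter_right _ (Set.prod_mono subset_closure subset_rfl)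
  have hTfin : {γ : ↑Λ | (γ : Ginf × Gf) ∈ (O (δ+4*ε)) ×ˢ B}.Finite := by
    have heq : {γ : ↑Λ | (γ : Ginf × Gf) ∈ (O (δ+4*ε)) ×ˢ B}
        = Subtype.val ⁻¹' (Λ ∩ (O (δ+4*ε)) ×ˢ B) := by
      ext γ
      simp [γ.2]
    rw [heq]
    exact hSbig.preimage (Subtype.val_injective.injOn)
  set T : Finset ↑Λ := hTfin.toFinset with hTdef
  -- pointwise identity on Ω'
  have hptwise : ∀ g ∈ Ω',
      (∑' γ : ↑Λ, Set.indicator U (fun _ => c) (g⁻¹ * h * ↑γ))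
        = ∑ γ ∈ T, Set.indicator U (fun _ => c) (g⁻¹ * h * ↑γ) := by
    intro g hg
    apply tsum_eq_sum
    intro γ hγT
    apply Set.indicator_of_notMem
    intro hmem
    apply hγT
    rw [hTdef, hTfin.mem_toFinset]
    have hγeq : (γ : Ginf × Gf) = h⁻¹ * g * (g⁻¹ * h * ↑γ) := by group
    constructor
    · have hfst : ((γ : Ginf × Gf)).1 = h.1⁻¹ * g.1 * (g⁻¹ * h * ↑γ).1 :=
        congrArg Prod.fst hγeq
      have hr : ε + (δ + 2*ε) + ε = δ + 4*ε := by ring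
      rw [hfst, ← hr]
      exact hOmul3 ε (δ+2*ε) ε hε0 (by linarith) hε0 (by linarith)
        _ (hOεsym h.1 hh1) _ hg.1 _ hmem.1
    · have hsnd : ((γ : Ginf × Gf)).2 = h.2⁻¹ * g.2 * (g⁻¹ * h * ↑γ).2 :=
        congrArg Prod.snd hγeq
      rw [hsnd]
      exact hWmulB _ (inv_mem hh2) _ hg.2 _ hmem.2
  -- rewrite each term as an indicator of a translate of U
  have hUmeas : MeasurableSet U :=
    (hOmeas ε hrε).prod hWopen.measurableSet
  have hΩ'meas : MeasurableSet Ω' := (hOmeas _ hrδ2).prod hBmeas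
  have hsmul_eq : ∀ (x : Ginf × Gf) (S : Set (Ginf × Gf)),
      x • S = (fun y => x⁻¹ * y) ⁻¹' S := by
    intro x S; ext y
    rw [Set.mem_smul_set_iff_inv_smul_mem]; rfl
  have hAmeas : ∀ γ : ↑Λ, MeasurableSet ((h * ↑γ) • U) := by
    intro γ
    rw [hsmul_eq]
    exact (measurable_const_mul _) hUmeas
  have hAvol : ∀ γ : ↑Λ, μ ((h * ↑γ) • U) = μ U :=
    fun γ => measure_smul (μ := μ) (h * ↑γ) U
  have hterm : ∀ γ : ↑Λ, (fun g : Ginf × Gf => Set.indicator U (fun _ => c) (g⁻¹ * h * ↑γ))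
      = Set.indicator ((h * ↑γ) • U) (fun _ => c) := by
    intro γ; funext g
    have hiff : g⁻¹ * h * ↑γ ∈ U ↔ g ∈ (h * ↑γ) • U := by
      rw [Set.mem_smul_set_iff_inv_smul_mem, smul_eq_mul]
      constructor
      · intro hu
        have h2 := hUsym _ hu
        have he : (g⁻¹ * h * ↑γ)⁻¹ = (h * ↑γ)⁻¹ * g := by group
        rwa [he] at h2
      · intro hu
        have h2 := hUsym _ hu
        have he : ((h * ↑γ)⁻¹ * g)⁻¹ = g⁻¹ * h * ↑γ := by group
        rwa [he] at h2
    by_cases hm : g⁻¹ * h * ↑γ ∈ U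
    · rw [Set.indicator_of_mem hm, Set.indicator_of_mem (hiff.mp hm)]
    · rw [Set.indicator_of_notMem hm, Set.indicator_of_notMem (fun hc => hm (hiff.mpr hc))]
  -- integrability and values
  have hint : ∀ γ : ↑Λ, Integrable (Set.indicator ((h * ↑γ) • U) (fun _ => c)) (μ.restrict Ω') := by
    intro γ
    rw [integrable_indicator_iff (hAmeas γ)]
    refine (integrableOn_const_iff).mpr (Or.inr ?_)
    rw [Measure.restrict_apply (hAmeas γ)]
    exact lt_of_le_of_lt (le_trans (measure_mono Set.inter_subset_left) ((hAvol γ).le)) hUfin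
  have hval : ∀ γ : ↑Λ, ∫ g in Ω', Set.indicator ((h * ↑γ) • U) (fun _ => c) g ∂μ
      = c * (μ (Ω' ∩ (h * ↑γ) • U)).toReal := by
    intro γ
    rw [setIntegral_indicator (hAmeas γ), setIntegral_const, smul_eq_mul, mul_comm]
    rfl
  have hvalnn : ∀ γ : ↑Λ, 0 ≤ ∫ g in Ω', Set.indicator ((h * ↑γ) • U) (fun _ => c) g ∂μ := by
    intro γ
    rw [hval γ]
    exact mul_nonneg hcpos.le ENNReal.toReal_nonneg
  -- γ's in Ωδ contribute exactly 1
  have hone : ∀ γ : ↑Λ, (γ : Ginf × Gf) ∈ Ωδ →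
      ∫ g in Ω', Set.indicator ((h * ↑γ) • U) (fun _ => c) g ∂μ = 1 := by
    intro γ hγδ
    have hsub : (h * ↑γ) • U ⊆ Ω' := by
      rintro - ⟨u, hu, rfl⟩
      have hfst : ((h * ↑γ) • u).1 = h.1 * (γ : Ginf × Gf).1 * u.1 := rfl
      have hsnd : ((h * ↑γ) • u).2 = h.2 * (γ : Ginf × Gf).2 * u.2 := rfl
      constructor
      · rw [hfst]
        have : ε + δ + ε = δ + 2*ε := by ring
        rw [← this]
        exact hOmul3 ε δ ε hε0 hδ0 hε0 (by linarith) _ hh1 _ hγδ.1 _ hu.1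
      · rw [hsnd]
        exact hWmulB _ hh2 _ hγδ.2 _ hu.2
    rw [hval γ, Set.inter_eq_self_of_subset_right hsub, hAvol γ]
    exact inv_mul_cancel₀ (ENNReal.toReal_pos hUpos.ne' hUfin.ne).ne'
  -- the integral I
  set I : ℝ := ∫ g in Ω',
      (∑' γ : ↑Λ, Set.indicator U (fun _ => c) (g⁻¹ * h * ↑γ)) ∂μ with hIdef
  have hIsum : I = ∑ γ ∈ T, ∫ g in Ω', Set.indicator ((h * ↑γ) • U) (fun _ => c) g ∂μ := by
    rw [hIdef, setIntegral_congr_fun hΩ'meas hptwise]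
    have hswap := integral_finset_sum (μ := μ.restrict Ω') T
      (f := fun (γ : ↑Λ) (g : Ginf × Gf) => Set.indicator ((h * ↑γ) • U) (fun _ => c) g)
      (fun γ _ => hint γ)
    rw [← hswap]
    apply setIntegral_congr_fun hΩ'meas
    intro g hg
    exact Finset.sum_congr rfl (fun γ _ => congrFun (hterm γ) g)
  -- the cardinality bound below I
  set Tδ : Finset ↑Λ := T.filter (fun γ => (γ : Ginf × Gf) ∈ Ωδ) with hTδdef
  have hΩδsub : Ωδ ⊆ (O (δ+4*ε)) ×ˢ B := by
    rintro ⟨x1, x2⟩ ⟨hx1, hx2⟩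
    refine ⟨?_, hx2⟩
    have h1 : (1:Ginf) ∈ O (4*ε) := mem_of_mem_nhds (hOnhd _ ⟨by linarith, by linarith⟩)
    have := hOmul δ (4*ε) hδ0 (by linarith) (by linarith) x1 hx1 1 h1
    rwa [mul_one] at this
  have hcard : ((Λ ∩ Ωδ).ncard : ℝ) = (Tδ.card : ℝ) := by
    have hset : Λ ∩ Ωδ = Subtype.val '' {γ : ↑Λ | γ ∈ Tδ} := by
      ext x
      constructor
      · rintro ⟨hxΛ, hxδ⟩
        refine ⟨⟨x, hxΛ⟩, ?_, rfl⟩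
        simp only [Set.mem_setOf_eq, hTδdef, Finset.mem_filter]
        exact ⟨by rw [hTdef, hTfin.mem_toFinset]; exact hΩδsub hxδ, hxδ⟩
      · rintro ⟨γ, hγ, rfl⟩
        simp only [Set.mem_setOf_eq, hTδdef, Finset.mem_filter] at hγ
        exact ⟨γ.2, hγ.2⟩
    rw [hset, Set.ncard_image_of_injective _ Subtype.val_injective]
    norm_cast
    rw [← Set.ncard_coe_finset]
    congr 1
  have hlow : ((Λ ∩ Ωδ).ncard : ℝ) ≤ I := by
    rw [hcard, hIsum]
    have h1 : (Tδ.card : ℝ) = ∑ γ ∈ Tδ, (1:ℝ) := by simp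
    rw [h1]
    have h2 : ∑ γ ∈ Tδ, (1:ℝ)
        = ∑ γ ∈ Tδ, ∫ g in Ω', Set.indicator ((h * ↑γ) • U) (fun _ => c) g ∂μ := by
      apply Finset.sum_congr rfl
      intro γ hγ
      rw [hTδdef, Finset.mem_filter] at hγ
      exact (hone γ hγ.2).symm
    rw [h2]
    exact Finset.sum_le_sum_of_subset_of_nonneg (Finset.filter_subset _ _)
      (fun γ _ _ => hvalnn γ)
  -- upper bound from the hypothesis
  have htoRpos : 0 < (μ Ω').toReal := ENNReal.toReal_pos hΩ'pos.ne' hΩ'fin.ne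
  have hI_le : I ≤ (1/V + α) * (μ Ω').toReal := by
    have hmul := mul_le_mul_of_nonneg_right havg htoRpos.le
    rwa [mul_comm (((μ Ω').toReal)⁻¹) I, mul_assoc, inv_mul_cancel₀ htoRpos.ne', mul_one] at hmul
  -- regularity bound
  have hreg : (μ Ω').toReal ≤ (1 + 2*D*ε/δ) * (μ Ωδ).toReal := by
    have h1 := hDreg δ (2*ε) hδ0 hδr (by linarith) (by linarith)
    have hfin : ENNReal.ofReal (1 + D*(2*ε)/δ) * μ Ωδ ≠ ⊤ :=
      ENNReal.mul_ne_top ENNReal.ofReal_ne_top hΩδfin.ne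
    have h2 := ENNReal.toReal_mono hfin h1
    rw [ENNReal.toReal_mul, ENNReal.toReal_ofReal (by positivity)] at h2
    have h3 : D*(2*ε)/δ = 2*D*ε/δ := by ring
    rwa [h3] at h2
  -- conclusion
  have hVα : 0 < 1/V + α := by positivity
  calc ((Λ ∩ Ωδ).ncard : ℝ) ≤ I := hlow
  _ ≤ (1/V + α) * (μ Ω').toReal := hI_le
  _ ≤ (1/V + α) * ((1 + 2*D*ε/δ) * (μ Ωδ).toReal) := by
      exact mul_le_mul_of_nonneg_left hreg hVα.le
  _ = (1/V + α) * (1 + 2*D*ε/δ) * (μ Ωδ).toReal := by ring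
end
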